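/- arXiv:2109.11354 — 5 statements merged into one kernel-verified Lean document; each statement's English description precedes it below -/
import Mathlib

section
/- Let X be a Banach space, K₁ ⊆ X compact, and V ⊆ C(K₁) compact. Then for all integers n, k ≥ 1 there exists a continuous operator G_k : V → C([0,1]ⁿ) with the following two properties. (1) There is a ReLU neural network φ : [0,1]ⁿ → ℝ of depth 2k³ + 8 whose width is bounded by an absolute constant (independent of n and k) such that φ(y) = G_k(u)(y) for every u ∈ V and every y ∈ [0,1]ⁿ. (2) For every integer m ≥ 1, every ReLU neural network ψ : [0,1]^{n+m} → ℝ with n + m inputs, depth at most k, and at most 2^k total nodes, every choice of points x₁, …, x_m ∈ K₁, and every u ∈ V, one has ∫_{[0,1]ⁿ} |G_k(u)(y) − ψ(u(x₁), …, u(x_m), y)| dy ≥ 1/64. -/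
open scoped BigOperators
open MeasureTheory
open scoped Classical

/-- A feedforward neural network, given by a number of affine layers (`depth`),
layer dimensions (`dims i` is the dimension of the output of the `i`-th affine map,
with `dims 0` the input dimension; the output layer has dimension 1), weights and biases.
Data beyond the relevant indices is junk. -/
structure NeuralNet where
  depth : ℕ
  dims : ℕ → ℕ
  weight : ℕ → ℕ → ℕ → ℝ
  bias : ℕ → ℕ → ℝ

namespace NeuralNet

/-- Output of the `i`-th hidden layer (layer `0` is the input itself),
where the activation `σ` is applied entrywise after each affine map. -/
def hidden (σ : ℝ → ℝ) (net : NeuralNet) (x : ℕ → ℝ) : ℕ → ℕ → ℝ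
  | 0 => x
  | i + 1 => fun r =>
      σ ((∑ c ∈ Finset.range (net.dims i),
            net.weight (i + 1) r c * hidden σ net x i c) + net.bias (i + 1) r)

/-- The (scalar) output of the network: the final affine map `A_depth`
applied, without activation, to the last hidden layer. -/
def output (σ : ℝ → ℝ) (net : NeuralNet) (x : ℕ → ℝ) : ℝ :=
  (∑ c ∈ Finset.range (net.dims (net.depth - 1)),
    net.weight net.depth 0 c * hidden σ net x (net.depth - 1) c) + net.bias net.depth 0

/-- The width of a network: the maximal dimension of a hidden layer. -/
def width (net : NeuralNet) : ℕ :=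
  (Finset.Icc 1 (net.depth - 1)).sup net.dims

/-- The total number of (hidden) nodes of a network. -/
def totalNodes (net : NeuralNet) : ℕ :=
  ∑ i ∈ Finset.Icc 1 (net.depth - 1), net.dims i

/-- `net` represents the function `f : ℝ^d → ℝ` with activation `σ`. -/
def Represents (σ : ℝ → ℝ) (net : NeuralNet) {d : ℕ} (f : (Fin d → ℝ) → ℝ) : Prop :=
  1 ≤ net.depth ∧ net.dims 0 = d ∧
    ∀ x : Fin d → ℝ,
      net.output σ (fun i => if h : i < d then x ⟨i, h⟩ else 0) = f x

/-- `net` represents the function `f : ℝ^d → ℝ` with activation `σ`, as a network with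
truncated inputs: each input coordinate `x` is first replaced by `⌊base ^ κ * x⌋`. -/
def RepresentsTrunc (σ : ℝ → ℝ) (net : NeuralNet) (base : ℝ) {d : ℕ}
    (f : (Fin d → ℝ) → ℝ) : Prop :=
  ∃ κ : ℤ, 1 ≤ net.depth ∧ net.dims 0 = d ∧
    ∀ x : Fin d → ℝ,
      net.output σ (fun i => if h : i < d then (⌊base ^ κ * x ⟨i, h⟩⌋ : ℝ) else 0) = f x

end NeuralNet

/-- The ReLU activation function. -/
def relu : ℝ → ℝ := fun t => max t 0

/-- `σ` has the density property: for every dimension `d`, the span of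
`{x ↦ σ (w ⬝ x - θ)}` is dense in `C(ℝ^d)` for uniform convergence on compact sets. -/
def DensityProperty (σ : ℝ → ℝ) : Prop :=
  ∀ (d : ℕ) (f : (Fin d → ℝ) → ℝ), Continuous f →
    ∀ K : Set (Fin d → ℝ), IsCompact K → ∀ ε : ℝ, 0 < ε →
      ∃ (N : ℕ) (c : Fin N → ℝ) (w : Fin N → Fin d → ℝ) (θ : Fin N → ℝ),
        ∀ x ∈ K, |f x - ∑ i : Fin N, c i * σ ((∑ j : Fin d, w i j * x j) - θ i)| < ε

/-- `σ` is continuously differentiable at some point with a nonzero derivative there: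
differentiable on a neighborhood of `α`, with derivative continuous at `α` and nonzero. -/
def ContDiffAtNonzeroDeriv (σ : ℝ → ℝ) : Prop :=
  ∃ α : ℝ, (∀ᶠ x in nhds α, DifferentiableAt ℝ σ x) ∧
    ContinuousAt (deriv σ) α ∧ deriv σ α ≠ 0

/-- `σ` is a polynomial function. -/
def IsPolyFun (σ : ℝ → ℝ) : Prop :=
  ∃ p : Polynomial ℝ, ∀ x : ℝ, σ x = p.eval x

/-- `σ` is a non-affine polynomial function (degree at least 2). -/
def IsNonAffinePolyFun (σ : ℝ → ℝ) : Prop :=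
  ∃ p : Polynomial ℝ, 2 ≤ p.natDegree ∧ ∀ x : ℝ, σ x = p.eval x

/-!
`G_k(u)` is the sawtooth `y ↦ tent^[2k³+7] (y₀)`, independent of `u`, which a width-2 ReLU network
of depth `2k³+8` computes exactly. On a line in the `y₀`-direction a ReLU network is piecewise
affine, and a layer of width `w` multiplies the number of pieces by at most `w + 1`, so a network
of depth `≤ k` with `≤ 2^k` nodes has at most `2^(k(k+1))` pieces there. An affine function is at
`L¹`-distance at least a quarter of the width from each tooth of the sawtooth (of width
`2^-(2k³+6)`), and a piece of length `ℓ` contains at least `ℓ 2^(2k³+6) - 2` whole teeth. Hence on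
every such line the `L¹` error is at least `1/4 - 2^(k(k+1)) / 2^(2k³+7) ≥ 1/64`, and Fubini
concludes.
-/

open Set

lemma relu_of_nonneg {t : ℝ} (h : 0 ≤ t) : relu t = t := max_eq_left h

lemma relu_of_nonpos {t : ℝ} (h : t ≤ 0) : relu t = 0 := max_eq_right h

lemma relu_mul_of_nonneg (a : ℝ) {s : ℝ} (hs : 0 ≤ s) : relu (a * s) = relu a * s := by
  rw [relu, relu, max_mul_of_nonneg _ _ hs, zero_mul]

@[fun_prop]
lemma continuous_relu : Continuous relu := continuous_id.max continuous_const

/-- The tent map of `[0,1]`, written with `relu` so that it is one hidden layer of width 2. -/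
noncomputable def tent (t : ℝ) : ℝ := 2 * relu t - 4 * relu (t - 1 / 2)

@[fun_prop]
lemma continuous_tent : Continuous tent := by
  unfold tent; fun_prop

lemma tent_of_le_half {t : ℝ} (h0 : 0 ≤ t) (h : t ≤ 1 / 2) : tent t = 2 * t := by
  rw [tent, relu_of_nonneg h0, relu_of_nonpos (by linarith)]; ring

lemma tent_of_half_le {t : ℝ} (h : 1 / 2 ≤ t) : tent t = 2 - 2 * t := by
  rw [tent, relu_of_nonneg (by linarith), relu_of_nonneg (by linarith)]; ring

lemma tent_one_sub {t : ℝ} (h0 : 0 ≤ t) (h1 : t ≤ 1) : tent (1 - t) = tent t := by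
  rcases le_total t (1 / 2) with h | h
  · rw [tent_of_half_le (by linarith), tent_of_le_half h0 h]; ring
  · rw [tent_of_le_half (by linarith) (by linarith), tent_of_half_le h]; ring

lemma tent_iterate_succ_eq (L i : ℕ) (hi : i < 2 ^ L) {x : ℝ}
    (hx₀ : (i : ℝ) ≤ 2 ^ L * x) (hx₁ : 2 ^ L * x ≤ i + 1) :
    tent^[L + 1] x = tent (2 ^ L * x - i) := by
  induction L generalizing i x with
  | zero => simp_all
  | succ L ih =>
    have hP : (0 : ℝ) < 2 ^ L := by positivity
    rw [pow_succ] at hx₀ hx₁ ⊢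
    rw [Function.iterate_succ_apply]
    rcases lt_or_ge i (2 ^ L) with hi' | hi'
    · have hiP : (i : ℝ) + 1 ≤ 2 ^ L := by exact_mod_cast hi'
      rw [tent_of_le_half (by nlinarith [i.cast_nonneg (α := ℝ)]) (by nlinarith),
        ih i hi' (by linarith) (by linarith)]
      ring_nf
    · -- the right half of `[0,1]` is folded onto the interval with index `i' = 2ᴸ⁺¹ - 1 - i`
      obtain ⟨i', hi'i⟩ : ∃ i', i + i' + 1 = 2 * 2 ^ L := ⟨2 * 2 ^ L - 1 - i, by omega⟩
      have hsum : (i : ℝ) + i' + 1 = 2 * 2 ^ L := by exact_mod_cast hi'i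
      have hiP : (2 : ℝ) ^ L ≤ i := by exact_mod_cast hi'
      rw [tent_of_half_le (by nlinarith), ih i' (by omega) (by nlinarith) (by nlinarith),
        ← tent_one_sub (by linarith) (by linarith)]
      congr 1
      linear_combination hsum

lemma tent_iterate_succ_eq_of_mem_Icc (L i : ℕ) (hi : i < 2 ^ L) {x : ℝ}
    (hx : x ∈ Icc ((i : ℝ) / 2 ^ L) ((i + 1) / 2 ^ L)) :
    tent^[L + 1] x = tent (2 ^ L * x - i) := by
  have hP : (0 : ℝ) < 2 ^ L := by positivity
  rw [mem_Icc, div_le_iff₀' hP, le_div_iff₀' hP] at hx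
  exact tent_iterate_succ_eq L i hi hx.1 hx.2

lemma integral_affine (c d p q : ℝ) :
    ∫ s in p..q, (c + d * s) = c * (q - p) + d * ((q ^ 2 - p ^ 2) / 2) := by
  rw [intervalIntegral.integral_add (f := fun _ => c) (g := fun s => d * s)
      intervalIntegrable_const (intervalIntegral.intervalIntegrable_id.const_mul d),
    intervalIntegral.integral_const_mul]
  simp; ring

/-- The signs `-, +, +, -` on the four quarters of `[0,1]` annihilate every affine function, but
not the tent. -/
lemma quarter_le_integral_abs_tent_sub (c d : ℝ) :
    1 / 4 ≤ ∫ s in (0 : ℝ)..1, |tent s - (c + d * s)| := by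
  set h : ℝ → ℝ := fun s => tent s - (c + d * s)
  have hh : Continuous h := by fun_prop
  have habs : ∀ p q : ℝ, IntervalIntegrable (fun s => |h s|) volume p q :=
    fun p q => hh.abs.intervalIntegrable p q
  have hleft : ∀ p q : ℝ, 0 ≤ p → q ≤ 1 / 2 → p ≤ q →
      ∫ s in p..q, h s = -c * (q - p) + (2 - d) * ((q ^ 2 - p ^ 2) / 2) := by
    intro p q hp hq hpq
    rw [← integral_affine]
    refine intervalIntegral.integral_congr fun s hs => ?_
    rw [uIcc_of_le hpq] at hs
    simp only [h, tent_of_le_half (hp.trans hs.1) (hs.2.trans hq)]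
    ring
  have hright : ∀ p q : ℝ, 1 / 2 ≤ p → p ≤ q →
      ∫ s in p..q, h s = (2 - c) * (q - p) + (-2 - d) * ((q ^ 2 - p ^ 2) / 2) := by
    intro p q hp hpq
    rw [← integral_affine]
    refine intervalIntegral.integral_congr fun s hs => ?_
    rw [uIcc_of_le hpq] at hs
    simp only [h, tent_of_half_le (hp.trans hs.1)]
    ring
  have hsplit : ∫ s in (0 : ℝ)..1, |h s| = (∫ s in (0 : ℝ)..1 / 4, |h s|)
      + (∫ s in (1 / 4 : ℝ)..1 / 2, |h s|) + (∫ s in (1 / 2 : ℝ)..3 / 4, |h s|)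
      + ∫ s in (3 / 4 : ℝ)..1, |h s| := by
    simp only [intervalIntegral.integral_add_adjacent_intervals (habs _ _) (habs _ _)]
  have hquarter : ∀ p q : ℝ, p ≤ q → |∫ s in p..q, h s| ≤ ∫ s in p..q, |h s| :=
    fun p q hpq => intervalIntegral.abs_integral_le_integral_abs hpq
  have h₁ := abs_le.1 (hquarter 0 (1 / 4) (by norm_num))
  have h₂ := abs_le.1 (hquarter (1 / 4) (1 / 2) (by norm_num))
  have h₃ := abs_le.1 (hquarter (1 / 2) (3 / 4) (by norm_num))
  have h₄ := abs_le.1 (hquarter (3 / 4) 1 (by norm_num))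
  rw [hleft 0 (1 / 4) le_rfl (by norm_num) (by norm_num)] at h₁
  rw [hleft (1 / 4) (1 / 2) (by norm_num) le_rfl (by norm_num)] at h₂
  rw [hright (1 / 2) (3 / 4) le_rfl (by norm_num)] at h₃
  rw [hright (3 / 4) 1 (by norm_num) (by norm_num)] at h₄
  rw [hsplit]
  linarith [h₁.1, h₂.2, h₃.2, h₄.1]

def AffineOn (g : ℝ → ℝ) (s : Set ℝ) : Prop :=
  ∃ c d : ℝ, ∀ x ∈ s, g x = c + d * x

namespace AffineOn

variable {g h : ℝ → ℝ} {s : Set ℝ}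

lemma mono {t : Set ℝ} (hg : AffineOn g s) (hts : t ⊆ s) : AffineOn g t :=
  let ⟨c, d, hcd⟩ := hg
  ⟨c, d, fun x hx => hcd x (hts hx)⟩

lemma of_subsingleton (hs : s.Subsingleton) : AffineOn g s := by
  rcases hs.eq_empty_or_singleton with rfl | ⟨x, rfl⟩
  · exact ⟨0, 0, fun _ hx => hx.elim⟩
  · exact ⟨g x, 0, fun y hy => by rw [hy]; ring⟩

lemma const (β : ℝ) : AffineOn (fun _ => β) s := ⟨β, 0, fun _ _ => by ring⟩

lemma add (hg : AffineOn g s) (hh : AffineOn h s) : AffineOn (fun t => g t + h t) s := by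
  obtain ⟨c, d, hcd⟩ := hg
  obtain ⟨c', d', hcd'⟩ := hh
  exact ⟨c + c', d + d', fun x hx => by beta_reduce; rw [hcd x hx, hcd' x hx]; ring⟩

lemma const_mul (hg : AffineOn g s) (β : ℝ) : AffineOn (fun t => β * g t) s := by
  obtain ⟨c, d, hcd⟩ := hg
  exact ⟨β * c, β * d, fun x hx => by beta_reduce; rw [hcd x hx]; ring⟩

lemma sum {ι : Type*} {I : Finset ι} {F : ι → ℝ → ℝ} (hF : ∀ i ∈ I, AffineOn (F i) s) :
    AffineOn (fun t => ∑ i ∈ I, F i t) s := by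
  classical
  induction I using Finset.induction_on with
  | empty => simpa using const 0
  | insert i I hi ih =>
    simp only [Finset.sum_insert hi]
    exact (hF i (Finset.mem_insert_self i I)).add
      (ih fun j hj => hF j (Finset.mem_insert_of_mem hj))

lemma exists_relu_comp {p q : ℝ} (hg : AffineOn g (Icc p q)) (hpq : p ≤ q) :
    ∃ z ∈ Icc p q, AffineOn (fun t => relu (g t)) (Icc p z) ∧
      AffineOn (fun t => relu (g t)) (Icc z q) := by
  obtain ⟨c, d, hcd⟩ := hg
  by_cases hd : d = 0
  · refine ⟨p, left_mem_Icc.2 hpq, of_subsingleton (subsingleton_Icc_of_ge le_rfl),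
      relu c, 0, fun x hx => ?_⟩
    beta_reduce; rw [hcd x hx, hd]; ring_nf
  have hg₀ : ∀ x ∈ Icc p q, g x = d * (x - -c / d) := fun x hx => by
    rw [hcd x hx]; field_simp; ring
  set z₀ := -c / d
  have hleft : ∀ {u v}, p ≤ u → v ≤ q → v ≤ z₀ → AffineOn (fun t => relu (g t)) (Icc u v) :=
    fun hu hv hvz => ⟨relu (-d) * z₀, -relu (-d), fun x hx => by
      have hx' : x ∈ Icc p q := ⟨hu.trans hx.1, hx.2.trans hv⟩
      beta_reduce
      rw [hg₀ x hx', show d * (x - z₀) = -d * (z₀ - x) by ring,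
        relu_mul_of_nonneg _ (by linarith [hx.2])]
      ring⟩
  have hright : ∀ {u v}, p ≤ u → v ≤ q → z₀ ≤ u → AffineOn (fun t => relu (g t)) (Icc u v) :=
    fun hu hv hzu => ⟨-relu d * z₀, relu d, fun x hx => by
      have hx' : x ∈ Icc p q := ⟨hu.trans hx.1, hx.2.trans hv⟩
      beta_reduce
      rw [hg₀ x hx', relu_mul_of_nonneg _ (by linarith [hx.1])]
      ring⟩
  rcases le_total z₀ p with hzp | hpz
  · exact ⟨p, left_mem_Icc.2 hpq, of_subsingleton (subsingleton_Icc_of_ge le_rfl),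
      hright le_rfl le_rfl hzp⟩
  rcases le_total q z₀ with hqz | hzq
  · exact ⟨q, right_mem_Icc.2 hpq, hleft le_rfl le_rfl hqz,
      of_subsingleton (subsingleton_Icc_of_ge le_rfl)⟩
  · exact ⟨z₀, ⟨hpz, hzq⟩, hleft le_rfl hzq le_rfl, hright hpz le_rfl le_rfl⟩

end AffineOn

lemma le_integral_abs_tent_iterate_sub_on_tooth (L i : ℕ) (hi : i < 2 ^ L) {h : ℝ → ℝ}
    (hh : AffineOn h (Icc ((i : ℝ) / 2 ^ L) ((i + 1) / 2 ^ L))) :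
    1 / (4 * 2 ^ L) ≤ ∫ x in (i : ℝ) / 2 ^ L..(i + 1) / 2 ^ L, |tent^[L + 1] x - h x| := by
  obtain ⟨c, d, hcd⟩ := hh
  have hP : (0 : ℝ) < 2 ^ L := by positivity
  set F : ℝ → ℝ := fun s => |tent s - ((c + d * i / 2 ^ L) + d / 2 ^ L * s)|
  have hle : (i : ℝ) / 2 ^ L ≤ (i + 1) / 2 ^ L := by gcongr; linarith
  calc 1 / (4 * 2 ^ L) ≤ (2 ^ L : ℝ)⁻¹ * ∫ s in (0 : ℝ)..1, F s := by
        rw [one_div, mul_inv, mul_comm]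
        gcongr
        simpa using quarter_le_integral_abs_tent_sub (c + d * i / 2 ^ L) (d / 2 ^ L)
    _ = ∫ x in (i : ℝ) / 2 ^ L..(i + 1) / 2 ^ L, F (2 ^ L * x - i) := by
        rw [intervalIntegral.integral_comp_mul_sub F hP.ne', smul_eq_mul]
        field_simp
        ring_nf
    _ = ∫ x in (i : ℝ) / 2 ^ L..(i + 1) / 2 ^ L, |tent^[L + 1] x - h x| := by
        refine intervalIntegral.integral_congr fun x hx => ?_
        rw [uIcc_of_le hle] at hx
        simp only [F, tent_iterate_succ_eq_of_mem_Icc L i hi hx, hcd x hx]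
        congr 2
        field_simp
        ring

/-- At least `(q - p) K - 2` cells of the grid `(ℕ / K)` lie inside `[p, q]`. -/
lemma le_intervalIntegral_of_le_integral_grid {f : ℝ → ℝ} {K δ p q : ℝ} (hK : 0 < K)
    (hδ : 0 ≤ δ) (hp : 0 ≤ p) (hpq : p ≤ q) (hf : ∀ x ∈ Icc p q, 0 ≤ f x)
    (hfi : IntervalIntegrable f volume p q)
    (hcell : ∀ i : ℕ, p ≤ i / K → (i + 1) / K ≤ q → δ ≤ ∫ x in i / K..(i + 1) / K, f x) :
    ((q - p) * K - 2) * δ ≤ ∫ x in p..q, f x := by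
  set i₀ := ⌈p * K⌉₊
  set i₁ := ⌊q * K⌋₊
  have hpi₀ : p ≤ i₀ / K := by rw [le_div_iff₀ hK]; exact Nat.le_ceil _
  have hi₀p : (i₀ : ℝ) < p * K + 1 := Nat.ceil_lt_add_one (by positivity)
  have hi₁q : i₁ / K ≤ q := by rw [div_le_iff₀ hK]; exact Nat.floor_le (by nlinarith)
  have hqi₁ : q * K < i₁ + 1 := Nat.lt_floor_add_one _
  rcases le_or_gt i₀ i₁ with hle | hlt
  · have hcast : (q - p) * K - 2 ≤ ((i₁ - i₀ : ℕ) : ℝ) := by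
      rw [Nat.cast_sub hle]; nlinarith
    have hmono : ∀ {i j : ℕ}, i ≤ j → (i : ℝ) / K ≤ j / K := fun hij => by gcongr
    calc ((q - p) * K - 2) * δ ≤ ∑ _i ∈ Finset.Ico i₀ i₁, δ := by
          rw [Finset.sum_const, Nat.card_Ico, nsmul_eq_mul]
          gcongr
      _ ≤ ∑ i ∈ Finset.Ico i₀ i₁, ∫ x in (i : ℝ) / K..(i + 1) / K, f x := by
          refine Finset.sum_le_sum fun i hi => hcell i ?_ ?_
          · exact hpi₀.trans (hmono (Finset.mem_Ico.1 hi).1)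
          · exact_mod_cast (hmono (Nat.succ_le_of_lt (Finset.mem_Ico.1 hi).2)).trans hi₁q
      _ = ∫ x in (i₀ : ℝ) / K..i₁ / K, f x := by
          have := intervalIntegral.sum_integral_adjacent_intervals_Ico (a := fun i : ℕ => i / K)
            (f := f) (μ := volume) hle fun i hi => hfi.mono_set ?_
          · simpa only [Nat.cast_succ] using this
          rw [uIcc_of_le hpq, uIcc_of_le (hmono (Nat.le_succ i))]
          exact Icc_subset_Icc (hpi₀.trans (hmono hi.1))
            ((hmono (Nat.succ_le_of_lt hi.2)).trans hi₁q)
      _ ≤ ∫ x in p..q, f x :=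
          intervalIntegral.integral_mono_interval hpi₀ (hmono hle) hi₁q
            ((ae_restrict_iff' measurableSet_Ioc).2 (Filter.Eventually.of_forall
              fun x hx => hf x (Ioc_subset_Icc_self hx))) hfi
  · have hneg : (q - p) * K - 2 ≤ 0 := by
      have : (i₁ : ℝ) + 1 ≤ i₀ := by exact_mod_cast hlt
      nlinarith
    exact (mul_nonpos_of_nonpos_of_nonneg hneg hδ).trans
      (intervalIntegral.integral_nonneg hpq hf)

lemma le_integral_abs_tent_iterate_sub_of_affineOn (L : ℕ) {h : ℝ → ℝ} (hc : Continuous h)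
    {p q : ℝ} (hp : 0 ≤ p) (hpq : p ≤ q) (hq : q ≤ 1) (hh : AffineOn h (Icc p q)) :
    (q - p) / 4 - 1 / 2 ^ (L + 1) ≤ ∫ x in p..q, |tent^[L + 1] x - h x| := by
  have hP : (0 : ℝ) < 2 ^ L := by positivity
  have key := le_intervalIntegral_of_le_integral_grid (f := fun x => |tent^[L + 1] x - h x|)
    hP (by positivity : (0 : ℝ) ≤ 1 / (4 * 2 ^ L)) hp hpq (fun x _ => abs_nonneg _)
    (((continuous_tent.iterate _).sub hc).abs.intervalIntegrable p q) fun i hpi hiq => by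
      refine le_integral_abs_tent_iterate_sub_on_tooth L i ?_ (hh.mono (Icc_subset_Icc hpi hiq))
      have : ((i : ℝ) + 1) / 2 ^ L ≤ 1 := hiq.trans hq
      rw [div_le_one hP] at this
      exact_mod_cast (lt_add_one (i : ℝ)).trans_le this
  calc (q - p) / 4 - 1 / 2 ^ (L + 1) = ((q - p) * 2 ^ L - 2) * (1 / (4 * 2 ^ L)) := by
        field_simp; ring
    _ ≤ _ := key

inductive Subdiv (P : ℝ → ℝ → Prop) : ℝ → ℝ → ℕ → Prop
  | base {a b : ℝ} (hab : a ≤ b) (h : P a b) : Subdiv P a b 1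
  | glue {a m b : ℝ} {N M : ℕ} (h₁ : Subdiv P a m N) (h₂ : Subdiv P m b M) : Subdiv P a b (N + M)

namespace Subdiv

variable {P Q : ℝ → ℝ → Prop} {a b : ℝ} {N : ℕ}

lemma le (h : Subdiv P a b N) : a ≤ b := by
  induction h with
  | base hab _ => exact hab
  | glue _ _ ih₁ ih₂ => exact ih₁.trans ih₂

lemma mono (h : Subdiv P a b N) (hPQ : ∀ u v, a ≤ u → v ≤ b → P u v → Q u v) :
    Subdiv Q a b N := by
  induction h with
  | base hab hP => exact base hab (hPQ _ _ le_rfl le_rfl hP)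
  | glue h₁ h₂ ih₁ ih₂ =>
    exact glue (ih₁ fun u v hu hv => hPQ u v hu (hv.trans h₂.le))
      (ih₂ fun u v hu hv => hPQ u v (h₁.le.trans hu) hv)

lemma mono_card (hP : ∀ x, P x x) (h : Subdiv P a b N) {M : ℕ} (hNM : N ≤ M) :
    Subdiv P a b M := by
  induction M, hNM using Nat.le_induction with
  | base => exact h
  | succ M _ ih => exact glue ih (base le_rfl (hP b))

lemma refine {K : ℕ} (h : Subdiv P a b N) (href : ∀ p q, p ≤ q → P p q → Subdiv Q p q K) :
    Subdiv Q a b (N * K) := by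
  induction h with
  | base hab hP => rw [one_mul]; exact href _ _ hab hP
  | glue _ _ ih₁ ih₂ => rw [Nat.add_mul]; exact glue ih₁ ih₂

lemma split (h : Subdiv P a b N)
    (hered : ∀ u v u' v', u ≤ u' → u' ≤ v' → v' ≤ v → P u v → P u' v')
    {z : ℝ} (hz : z ∈ Icc a b) :
    ∃ N₁ N₂ : ℕ, N₁ + N₂ ≤ N + 1 ∧ Subdiv P a z N₁ ∧ Subdiv P z b N₂ := by
  induction h with
  | @base a b hab hP =>
    exact ⟨1, 1, le_rfl, base hz.1 (hered _ _ _ _ le_rfl hz.1 hz.2 hP),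
      base hz.2 (hered _ _ _ _ hz.1 hz.2 le_rfl hP)⟩
  | @glue a m b N M h₁ h₂ ih₁ ih₂ =>
    rcases le_total z m with hzm | hmz
    · obtain ⟨N₁, N₂, hN, s₁, s₂⟩ := ih₁ ⟨hz.1, hzm⟩
      exact ⟨N₁, N₂ + M, by omega, s₁, glue s₂ h₂⟩
    · obtain ⟨N₁, N₂, hN, s₁, s₂⟩ := ih₂ ⟨hmz, hz.2⟩
      exact ⟨N + N₁, N₂, by omega, glue h₁ s₁, s₂⟩

lemma relu_layer (w : ℕ) (A : ℕ → ℝ → ℝ) (hab : a ≤ b)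
    (hA : ∀ r < w, AffineOn (A r) (Icc a b)) :
    Subdiv (fun u v => ∀ r < w, AffineOn (fun t => relu (A r t)) (Icc u v)) a b (w + 1) := by
  induction w with
  | zero => exact base hab fun r hr => absurd hr r.not_lt_zero
  | succ w ih =>
    obtain ⟨z, hz, hzL, hzR⟩ := (hA w w.lt_succ_self).exists_relu_comp hab
    obtain ⟨N₁, N₂, hN, s₁, s₂⟩ := (ih fun r hr => hA r (hr.trans w.lt_succ_self)).split
      (fun _ _ _ _ h₁ _ h₃ hP r hr => (hP r hr).mono (Icc_subset_Icc h₁ h₃)) hz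
    have extend : ∀ {p q : ℝ}, AffineOn (fun t => relu (A w t)) (Icc p q) →
        ∀ u v, p ≤ u → v ≤ q → (∀ r < w, AffineOn (fun t => relu (A r t)) (Icc u v)) →
        ∀ r < w + 1, AffineOn (fun t => relu (A r t)) (Icc u v) := fun hw u v hu hv hP r hr => by
      rcases Nat.lt_succ_iff_lt_or_eq.1 hr with hr | rfl
      · exact hP r hr
      · exact hw.mono (Icc_subset_Icc hu hv)
    exact ((s₁.mono (extend hzL)).glue (s₂.mono (extend hzR))).mono_card
      (fun _ _ _ => AffineOn.of_subsingleton (subsingleton_Icc_of_ge le_rfl)) hN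

lemma le_intervalIntegral {f : ℝ → ℝ} {α β : ℝ} (h : Subdiv P a b N)
    (hf : IntervalIntegrable f volume a b)
    (hP : ∀ p q, a ≤ p → p ≤ q → q ≤ b → P p q → α * (q - p) - β ≤ ∫ x in p..q, f x) :
    α * (b - a) - N * β ≤ ∫ x in a..b, f x := by
  induction h with
  | base hab hPab => simpa using hP _ _ le_rfl hab le_rfl hPab
  | @glue a m b N M h₁ h₂ ih₁ ih₂ =>
    have hf₁ : IntervalIntegrable f volume a m := hf.mono_set (by
      rw [uIcc_of_le h₁.le, uIcc_of_le (h₁.le.trans h₂.le)]; exact Icc_subset_Icc_right h₂.le)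
    have hf₂ : IntervalIntegrable f volume m b := hf.mono_set (by
      rw [uIcc_of_le h₂.le, uIcc_of_le (h₁.le.trans h₂.le)]; exact Icc_subset_Icc_left h₁.le)
    rw [← intervalIntegral.integral_add_adjacent_intervals hf₁ hf₂]
    have e₁ := ih₁ hf₁ fun p q hp hpq hq => hP p q hp hpq (hq.trans h₂.le)
    have e₂ := ih₂ hf₂ fun p q hp hpq hq => hP p q (h₁.le.trans hp) hpq hq
    push_cast
    linarith

lemma le_integral_abs_tent_iterate_sub {h : ℝ → ℝ} (hc : Continuous h)
    (hs : Subdiv (fun p q => AffineOn h (Icc p q)) 0 1 N) (L : ℕ) :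
    1 / 4 - N / 2 ^ (L + 1) ≤ ∫ x in (0 : ℝ)..1, |tent^[L + 1] x - h x| := by
  have := hs.le_intervalIntegral (f := fun x => |tent^[L + 1] x - h x|) (α := 1 / 4)
    (β := 1 / 2 ^ (L + 1)) (((continuous_tent.iterate _).sub hc).abs.intervalIntegrable 0 1)
    fun p q hp hpq hq hpiece => by
      convert le_integral_abs_tent_iterate_sub_of_affineOn L hc hp hpq hq hpiece using 1
      ring
  convert this using 1
  ring

end Subdiv

namespace NeuralNet

lemma continuous_hidden {σ : ℝ → ℝ} (hσ : Continuous σ) (net : NeuralNet) (i : ℕ) :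
    ∀ r, Continuous fun x => net.hidden σ x i r := by
  induction i with
  | zero => exact continuous_apply
  | succ i ih =>
    exact fun r => hσ.comp ((continuous_finsetSum _ fun c _ =>
      continuous_const.mul (ih c)).add continuous_const)

lemma continuous_output {σ : ℝ → ℝ} (hσ : Continuous σ) (net : NeuralNet) :
    Continuous (net.output σ) :=
  (continuous_finsetSum _ fun c _ =>
    continuous_const.mul (continuous_hidden hσ net _ c)).add continuous_const

lemma Represents.continuous {σ : ℝ → ℝ} {net : NeuralNet} {d : ℕ} {f : (Fin d → ℝ) → ℝ}
    (hσ : Continuous σ) (h : net.Represents σ f) : Continuous f := by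
  rw [show f = fun x => net.output σ fun i => if h : i < d then x ⟨i, h⟩ else 0 from
    funext fun x => (h.2.2 x).symm]
  refine (continuous_output hσ net).comp (continuous_pi fun i => ?_)
  split_ifs
  · exact continuous_apply _
  · exact continuous_const

lemma subdiv_hidden (net : NeuralNet) {x : ℝ → ℕ → ℝ} {a b : ℝ} (hab : a ≤ b)
    (hx : ∀ j, AffineOn (fun t => x t j) (Icc a b)) (i : ℕ) :
    Subdiv (fun u v => ∀ r < net.dims i, AffineOn (fun t => net.hidden relu (x t) i r) (Icc u v))
      a b (∏ j ∈ Finset.Icc 1 i, (net.dims j + 1)) := by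
  induction i with
  | zero => simpa using Subdiv.base hab fun r _ => hx r
  | succ i ih =>
    rw [Finset.prod_Icc_succ_top (by omega)]
    refine ih.refine fun p q hpq hcell => Subdiv.relu_layer _ _ hpq fun r _ => ?_
    exact (AffineOn.sum fun c hc => (hcell c (Finset.mem_range.1 hc)).const_mul _).add
      (AffineOn.const _)

lemma subdiv_output (net : NeuralNet) {x : ℝ → ℕ → ℝ} {a b : ℝ} (hab : a ≤ b)
    (hx : ∀ j, AffineOn (fun t => x t j) (Icc a b)) :
    Subdiv (fun u v => AffineOn (fun t => net.output relu (x t)) (Icc u v))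
      a b (∏ j ∈ Finset.Icc 1 (net.depth - 1), (net.dims j + 1)) :=
  (net.subdiv_hidden hab hx _).mono fun _ _ _ _ hcell =>
    (AffineOn.sum fun c hc => (hcell c (Finset.mem_range.1 hc)).const_mul _).add (AffineOn.const _)

lemma Represents.subdiv_comp {net : NeuralNet} {d : ℕ} {f : (Fin d → ℝ) → ℝ}
    (h : net.Represents relu f) {v : ℝ → Fin d → ℝ} {a b : ℝ} (hab : a ≤ b)
    (hv : ∀ i, AffineOn (fun t => v t i) (Icc a b)) :
    Subdiv (fun u w => AffineOn (fun t => f (v t)) (Icc u w))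
      a b (∏ j ∈ Finset.Icc 1 (net.depth - 1), (net.dims j + 1)) := by
  simp_rw [← h.2.2]
  refine net.subdiv_output hab fun j => ?_
  by_cases hj : j < d
  · simpa only [hj, dif_pos] using hv ⟨j, hj⟩
  · simpa only [hj, dif_neg, not_false_eq_true] using AffineOn.const 0

lemma prod_dims_add_one_le {net : NeuralNet} {k : ℕ} (hdepth : net.depth ≤ k)
    (hnodes : net.totalNodes ≤ 2 ^ k) :
    ∏ j ∈ Finset.Icc 1 (net.depth - 1), (net.dims j + 1) ≤ 2 ^ (k * (k + 1)) := by
  calc ∏ j ∈ Finset.Icc 1 (net.depth - 1), (net.dims j + 1)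
      ≤ (2 ^ k + 1) ^ (Finset.Icc 1 (net.depth - 1)).card :=
        Finset.prod_le_pow_card _ _ _ fun j hj => by
          have := Finset.single_le_sum (fun i _ => Nat.zero_le (net.dims i)) hj
          unfold totalNodes at hnodes
          omega
    _ ≤ (2 ^ (k + 1)) ^ k := by
        have hbase : 2 ^ k + 1 ≤ 2 ^ (k + 1) := by
          rw [pow_succ]; linarith [Nat.one_le_two_pow (n := k)]
        have hcard : (Finset.Icc 1 (net.depth - 1)).card ≤ k := by simp; omega
        exact (Nat.pow_le_pow_left hbase _).trans (Nat.pow_le_pow_right (by positivity) hcard)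
    _ = 2 ^ (k * (k + 1)) := by rw [← pow_mul, mul_comm]

/-- The first layer reads off `x₀` twice, with biases `0` and `-1/2`; every later layer combines
the two units of the previous one into `tent = 2 relu(·) - 4 relu(· - 1/2)` and splits the result
again with biases `0` and `-1/2`. -/
noncomputable def sawtooth (n L : ℕ) : NeuralNet where
  depth := L + 2
  dims i := if i = 0 then n else 2
  weight i _ c := if i = 1 then (if c = 0 then 1 else 0) else
    (if c = 0 then 2 else if c = 1 then -4 else 0)
  bias _ r := if r = 1 then -(1 / 2) else 0

lemma sawtooth_sum_hidden (n L : ℕ) (x : ℕ → ℝ) (i r : ℕ) :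
    ∑ c ∈ Finset.range ((sawtooth n L).dims (i + 1)),
      (sawtooth n L).weight (i + 1 + 1) r c * (sawtooth n L).hidden relu x (i + 1) c =
    2 * (sawtooth n L).hidden relu x (i + 1) 0 - 4 * (sawtooth n L).hidden relu x (i + 1) 1 := by
  simp [sawtooth, Finset.sum_range_succ]
  ring

lemma sawtooth_hidden (n L : ℕ) (x : ℕ → ℝ) (i r : ℕ) :
    (sawtooth (n + 1) L).hidden relu x (i + 1) r =
      relu (tent^[i] (x 0) + (sawtooth (n + 1) L).bias (i + 1) r) := by
  induction i generalizing r with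
  | zero => simp [hidden, sawtooth, Finset.sum_ite_eq']
  | succ i ih =>
    rw [hidden]
    beta_reduce
    rw [sawtooth_sum_hidden, ih, ih, Function.iterate_succ_apply']
    simp [sawtooth, tent, sub_eq_add_neg]

lemma sawtooth_represents (n L : ℕ) :
    (sawtooth (n + 1) L).Represents relu fun y : Fin (n + 1) → ℝ => tent^[L + 1] (y 0) := by
  refine ⟨by simp [sawtooth], rfl, fun y => ?_⟩
  rw [output, show (sawtooth (n + 1) L).depth = L + 1 + 1 from rfl, Nat.add_sub_cancel,
    sawtooth_sum_hidden, sawtooth_hidden, sawtooth_hidden]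
  simp [sawtooth, tent, Function.iterate_succ_apply', sub_eq_add_neg]

lemma sawtooth_width (n L : ℕ) : (sawtooth n L).width ≤ 2 :=
  Finset.sup_le fun i hi => by simp [sawtooth, Nat.one_le_iff_ne_zero.1 (Finset.mem_Icc.1 hi).1]

end NeuralNet

lemma le_setIntegral_Icc_of_le_integral_slice {n : ℕ} {F : (Fin (n + 1) → ℝ) → ℝ}
    (hF : Continuous F) {c : ℝ} (h : ∀ y, c ≤ ∫ t in Icc (0 : ℝ) 1, F (Fin.cons t y)) :
    c ≤ ∫ y in Icc (0 : Fin (n + 1) → ℝ) 1, F y := by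
  set e : ℝ × (Fin n → ℝ) ≃ᵐ (Fin (n + 1) → ℝ) :=
    (MeasurableEquiv.piFinSuccAbove (fun _ => ℝ) 0).symm
  have hem : MeasurePreserving e (volume.prod volume) volume :=
    (volume_preserving_piFinSuccAbove (fun _ : Fin (n + 1) => ℝ) 0).symm _
  have he : ∀ p, e p = Fin.cons p.1 p.2 := fun p => by
    simp [e, MeasurableEquiv.piFinSuccAbove_symm_apply, Fin.insertNthEquiv, Fin.insertNth_zero']
  have hpre : e ⁻¹' Icc 0 1 = Icc (0 : ℝ) 1 ×ˢ Icc (0 : Fin n → ℝ) 1 :=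
    ((Fin.insertNthOrderIso (fun _ => ℝ) 0).preimage_Icc _ _).trans (Icc_prod_eq _ _)
  have hG : Continuous fun p : (Fin n → ℝ) × ℝ => F (Fin.cons p.2 p.1) := by fun_prop
  rw [← hem.map_eq, setIntegral_map_equiv, hpre, ← setIntegral_prod_swap]
  simp only [he, Prod.fst_swap, Prod.snd_swap]
  rw [setIntegral_prod _
    (hG.continuousOn.integrableOn_compact (isCompact_Icc.prod isCompact_Icc))]
  have hslice : Continuous fun y : Fin n → ℝ => ∫ t in Icc (0 : ℝ) 1, F (Fin.cons t y) :=
    continuous_parametric_integral_of_continuous (f := fun y t => F (Fin.cons t y)) hG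
      isCompact_Icc
  have := setIntegral_ge_of_const_le (μ := volume) (s := Icc (0 : Fin n → ℝ) 1)
    measurableSet_Icc (by simp [Real.volume_Icc_pi]) (fun y _ => h y)
    (hslice.continuousOn.integrableOn_compact isCompact_Icc)
  simpa [Real.volume_Icc_pi, measureReal_def] using this

lemma affineOn_append_cons {m n : ℕ} (a : Fin m → ℝ) (y : Fin n → ℝ) (s : Set ℝ)
    (i : Fin (m + (n + 1))) :
    AffineOn (fun t => Fin.append a (Fin.cons t y : Fin (n + 1) → ℝ) i) s := by
  refine Fin.addCases (fun j => ?_) (fun j => ?_) i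
  · simpa only [Fin.append_left] using AffineOn.const (a j)
  · simp only [Fin.append_right]
    refine Fin.cases ⟨0, 1, fun t _ => by simp⟩ (fun j => ?_) j
    simpa only [Fin.cons_succ] using AffineOn.const (y j)

lemma one_div_sixty_four_le {k N : ℕ} (hk : 1 ≤ k) (hN : N ≤ 2 ^ (k * (k + 1))) :
    1 / 64 ≤ 1 / 4 - (N : ℝ) / 2 ^ (2 * k ^ 3 + 6 + 1) := by
  have hexp : k * (k + 1) ≤ 2 * k ^ 3 := by
    have : k + 1 ≤ 2 * k ^ 2 := by nlinarith
    calc k * (k + 1) ≤ k * (2 * k ^ 2) := Nat.mul_le_mul_left k this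
      _ = 2 * k ^ 3 := by ring
  have hN' : (N : ℝ) ≤ 2 ^ (2 * k ^ 3) := by
    exact_mod_cast hN.trans (Nat.pow_le_pow_right two_pos hexp)
  have : (N : ℝ) / 2 ^ (2 * k ^ 3 + 6 + 1) ≤ 1 / 128 := by
    rw [div_le_iff₀ (by positivity), pow_add, pow_add]
    norm_num
    linarith
  linarith

theorem statement0_general (X : Type*) [NormedAddCommGroup X]
    (K₁ : Set X) (V : Set C(K₁, ℝ)) :
    ∃ C : ℕ, ∀ n k : ℕ, 1 ≤ n → 1 ≤ k →
      ∃ G : V → C(Set.Icc (0 : Fin n → ℝ) 1, ℝ), Continuous G ∧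
        (∃ (net : NeuralNet) (φ : (Fin n → ℝ) → ℝ),
          NeuralNet.Represents relu net φ ∧
          net.depth = 2 * k ^ 3 + 8 ∧ net.width ≤ C ∧
          ∀ (u : V) (y : Fin n → ℝ) (hy : y ∈ Set.Icc (0 : Fin n → ℝ) 1),
            φ y = G u ⟨y, hy⟩) ∧
        (∀ m : ℕ, 1 ≤ m →
          ∀ (net : NeuralNet) (ψ : (Fin (m + n) → ℝ) → ℝ),
            NeuralNet.Represents relu net ψ →
            net.depth ≤ k → net.totalNodes ≤ 2 ^ k →
            ∀ (x : Fin m → K₁) (u : V),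
              (1 : ℝ) / 64 ≤
                ∫ y in Set.Icc (0 : Fin n → ℝ) 1,
                  if hy : y ∈ Set.Icc (0 : Fin n → ℝ) 1 then
                    |G u ⟨y, hy⟩ - ψ (Fin.append (fun j => (u : C(K₁, ℝ)) (x j)) y)|
                  else 0) := by

  refine ⟨2, fun n k hn hk => ?_⟩
  obtain ⟨n, rfl⟩ := Nat.exists_eq_add_of_le' hn
  set L := 2 * k ^ 3 + 6
  have hsaw : Continuous fun y : Fin (n + 1) → ℝ => tent^[L + 1] (y 0) := by fun_prop
  refine ⟨fun _ => ⟨fun y => tent^[L + 1] (y.1 0), hsaw.comp continuous_subtype_val⟩,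
    continuous_const, ⟨_, _, NeuralNet.sawtooth_represents n L, rfl,
    NeuralNet.sawtooth_width _ _, fun _ _ _ => rfl⟩, ?_⟩
  intro m _ net ψ hψ hdepth hnodes x u
  set a := fun j => (u : C(K₁, ℝ)) (x j)
  have hψc := hψ.continuous continuous_relu
  rw [setIntegral_congr_fun measurableSet_Icc
    (g := fun y => |tent^[L + 1] (y 0) - ψ (Fin.append a y)|) fun y hy => by simp [hy]]
  refine le_setIntegral_Icc_of_le_integral_slice (by fun_prop) fun y => ?_
  rw [integral_Icc_eq_integral_Ioc, ← intervalIntegral.integral_of_le zero_le_one]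
  simp only [Fin.cons_zero]
  exact (one_div_sixty_four_le hk (net.prod_dims_add_one_le hdepth hnodes)).trans
    ((hψ.subdiv_comp zero_le_one (affineOn_append_cons a y _)).le_integral_abs_tent_iterate_sub
      (hψc.comp (by fun_prop)) L)

/-- depth separation for operator ReLU networks. -/
theorem statement0 (X : Type*) [NormedAddCommGroup X] [NormedSpace ℝ X] [CompleteSpace X]
    (K₁ : Set X) (hK₁ : IsCompact K₁) (V : Set C(K₁, ℝ)) (hV : IsCompact V) :
    ∃ C : ℕ, ∀ n k : ℕ, 1 ≤ n → 1 ≤ k →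
      ∃ G : V → C(Set.Icc (0 : Fin n → ℝ) 1, ℝ), Continuous G ∧
        (∃ (net : NeuralNet) (φ : (Fin n → ℝ) → ℝ),
          NeuralNet.Represents relu net φ ∧
          net.depth = 2 * k ^ 3 + 8 ∧ net.width ≤ C ∧
          ∀ (u : V) (y : Fin n → ℝ) (hy : y ∈ Set.Icc (0 : Fin n → ℝ) 1),
            φ y = G u ⟨y, hy⟩) ∧
        (∀ m : ℕ, 1 ≤ m →
          ∀ (net : NeuralNet) (ψ : (Fin (m + n) → ℝ) → ℝ),
            NeuralNet.Represents relu net ψ →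
            net.depth ≤ k → net.totalNodes ≤ 2 ^ k →
            ∀ (x : Fin m → K₁) (u : V),
              (1 : ℝ) / 64 ≤
                ∫ y in Set.Icc (0 : Fin n → ℝ) 1,
                  if hy : y ∈ Set.Icc (0 : Fin n → ℝ) 1 then
                    |G u ⟨y, hy⟩ - ψ (Fin.append (fun j => (u : C(K₁, ℝ)) (x j)) y)|
                  else 0) :=
  statement0_general X K₁ V
end

section
/- Suppose σ : ℝ → ℝ is a non-affine polynomial. Let K ⊆ ℝⁿ be compact and f : K → ℝ continuous. Then for every ε > 0 there is a function g : ℝⁿ → ℝ represented by a σ-activated neural network with truncated inputs of width 6 such that |f(x) − g(x)| < ε for all x ∈ K. -/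
open scoped BigOperators
open MeasureTheory
open scoped Classical

open Polynomial

namespace S3Aux

noncomputable def Rfun (q : Polynomial ℝ) (lam z : ℝ) : ℝ :=
  ∑ i ∈ Finset.range (q.natDegree + 1), (q.coeff (i+1) / q.coeff 1) * lam ^ i * z ^ (i+1)

noncomputable def Mfun (q : Polynomial ℝ) (lam x y : ℝ) : ℝ :=
  ∑ i ∈ Finset.range (q.natDegree + 1),
    (q.coeff (i+2) / (2 * q.coeff 2)) * lam ^ i * ((x+y)^(i+2) - x^(i+2) - y^(i+2))

noncomputable def AZ (q P : Polynomial ℝ) (L : ℕ) (z0 : ℝ) : ℕ → ℝ → ℝ × ℝ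
  | 0 => fun _ => (0, z0)
  | (j+1) => fun lam =>
      (Mfun q lam (AZ q P L z0 j lam).1 (AZ q P L z0 j lam).2 + P.coeff (L - (j+1)),
       Rfun q lam (AZ q P L z0 j lam).2)

lemma AZ_cont (q P : Polynomial ℝ) (L : ℕ) (z0 : ℝ) :
    ∀ j, Continuous (fun lam => AZ q P L z0 j lam) := by
  intro j; induction j with
  | zero => exact continuous_const
  | succ j ih =>
    have h1 : Continuous fun lam => (AZ q P L z0 j lam).1 := continuous_fst.comp ih
    have h2 : Continuous fun lam => (AZ q P L z0 j lam).2 := continuous_snd.comp ih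
    refine Continuous.prodMk ?_ ?_
    · refine Continuous.add ?_ continuous_const
      unfold Mfun
      exact continuous_finset_sum _ (fun i _ => by fun_prop)
    · unfold Rfun
      exact continuous_finset_sum _ (fun i _ => by fun_prop)

lemma Rfun_zero (q : Polynomial ℝ) (hq1 : q.coeff 1 ≠ 0) (z : ℝ) : Rfun q 0 z = z := by
  unfold Rfun
  rw [Finset.sum_eq_single 0]
  · simp [div_self hq1]
  · intro i _ hi
    simp [zero_pow hi]
  · simp

lemma Mfun_zero (q : Polynomial ℝ) (hq2 : q.coeff 2 ≠ 0) (x y : ℝ) : Mfun q 0 x y = x * y := by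
  unfold Mfun
  rw [Finset.sum_eq_single 0]
  · field_simp
    ring
  · intro i _ hi
    simp [zero_pow hi]
  · simp

lemma AZ_snd_zero (q P : Polynomial ℝ) (L : ℕ) (z0 : ℝ) (hq1 : q.coeff 1 ≠ 0) :
    ∀ j, (AZ q P L z0 j 0).2 = z0 := by
  intro j; induction j with
  | zero => rfl
  | succ j ih => simp only [AZ, ih, Rfun_zero q hq1]

lemma AZ_fst_zero (q P : Polynomial ℝ) (L : ℕ) (z0 : ℝ)
    (hq1 : q.coeff 1 ≠ 0) (hq2 : q.coeff 2 ≠ 0) :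
    ∀ j, j ≤ L → (AZ q P L z0 j 0).1 = ∑ i ∈ Finset.range j, P.coeff (L - j + i) * z0 ^ i := by
  intro j; induction j with
  | zero => simp [AZ]
  | succ j ih =>
    intro hj
    have ihj := ih (by omega)
    simp only [AZ, ihj, AZ_snd_zero q P L z0 hq1, Mfun_zero q hq2]
    rw [Finset.sum_range_succ']
    simp only [pow_zero, mul_one, add_zero]
    congr 1
    rw [Finset.sum_mul]
    refine Finset.sum_congr rfl (fun i _ => ?_)
    have : L - (j+1) + (i+1) = L - j + i := by omega
    rw [this, pow_succ]
    ring

lemma AZ_eval_zero (q P : Polynomial ℝ) (z0 : ℝ)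
    (hq1 : q.coeff 1 ≠ 0) (hq2 : q.coeff 2 ≠ 0) :
    (AZ q P (P.natDegree + 1) z0 (P.natDegree + 1) 0).1 = P.eval z0 := by
  rw [AZ_fst_zero q P _ z0 hq1 hq2 _ le_rfl, Polynomial.eval_eq_sum_range]
  exact Finset.sum_congr rfl (fun i _ => by simp)

lemma Rfun_spec (q : Polynomial ℝ) (hq1 : q.coeff 1 ≠ 0) (lam z : ℝ) :
    q.eval (lam * z) - q.eval 0 = q.coeff 1 * lam * Rfun q lam z := by
  rw [Polynomial.eval_eq_sum_range (lam * z), ← Polynomial.coeff_zero_eq_eval_zero]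
  rw [Finset.sum_range_succ']
  unfold Rfun
  rw [Finset.mul_sum, Finset.sum_range_succ]
  have h0 : q.coeff (q.natDegree + 1) = 0 :=
    Polynomial.coeff_eq_zero_of_natDegree_lt (by omega)
  rw [h0]
  simp only [zero_div, zero_mul, mul_zero, add_zero]
  have : ∀ i ∈ Finset.range q.natDegree,
      q.coeff (i+1) * (lam*z)^(i+1) = q.coeff 1 * lam * ((q.coeff (i+1) / q.coeff 1) * lam ^ i * z ^ (i+1)) := by
    intro i _
    rw [mul_pow]
    field_simp
    ring
  rw [Finset.sum_congr rfl this]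
  simp

lemma Mfun_spec (q : Polynomial ℝ) (hd : 2 ≤ q.natDegree) (hq2 : q.coeff 2 ≠ 0) (lam x y : ℝ) :
    q.eval (lam * (x+y)) - q.eval (lam * x) - q.eval (lam * y) + q.eval 0
      = 2 * q.coeff 2 * lam^2 * Mfun q lam x y := by
  obtain ⟨e, he⟩ : ∃ e, q.natDegree = e + 2 := ⟨q.natDegree - 2, by omega⟩
  rw [Polynomial.eval_eq_sum_range (lam * (x+y)), Polynomial.eval_eq_sum_range (lam * x),
    Polynomial.eval_eq_sum_range (lam * y), ← Polynomial.coeff_zero_eq_eval_zero]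
  rw [← Finset.sum_sub_distrib, ← Finset.sum_sub_distrib]
  rw [he]
  rw [show e + 2 + 1 = e + 3 by rfl]
  conv_lhs => rw [Finset.sum_range_succ', Finset.sum_range_succ']
  unfold Mfun
  rw [he, show e + 2 + 1 = e + 3 by rfl]
  conv_rhs => rw [Finset.mul_sum, Finset.sum_range_succ, Finset.sum_range_succ]
  have h1 : q.coeff (e + 2 + 2) = 0 := Polynomial.coeff_eq_zero_of_natDegree_lt (by omega)
  have h2 : q.coeff (e + 1 + 2) = 0 := Polynomial.coeff_eq_zero_of_natDegree_lt (by omega)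
  rw [h1, h2]
  simp only [zero_div, zero_mul, mul_zero, add_zero]
  have : ∀ i ∈ Finset.range (e+1),
      q.coeff (i+1+1) * (lam*(x+y))^(i+1+1) - q.coeff (i+1+1) * (lam*x)^(i+1+1)
        - q.coeff (i+1+1) * (lam*y)^(i+1+1)
      = 2 * q.coeff 2 * lam^2 * ((q.coeff (i+2) / (2 * q.coeff 2)) * lam ^ i * ((x+y)^(i+2) - x^(i+2) - y^(i+2))) := by
    intro i _
    rw [mul_pow, mul_pow, mul_pow]
    have : i + 1 + 1 = i + 2 := rfl
    rw [this]
    field_simp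
    ring
  rw [Finset.sum_congr rfl this]
  ring


/-- The width-6 (really width-3) network implementing truncated-input Horner evaluation. -/
noncomputable def mkNet (n : ℕ) (a sa q1 q2 lam : ℝ) (w : ℕ → ℝ) (co : ℕ → ℝ) (m : ℕ) :
    NeuralNet :=
  { depth := m + 2
    dims := fun i => if i = 0 then n else 6
    weight := fun j r c =>
      if j = 1 then (if r = 0 ∨ r = 2 then lam * w c else 0)
      else if j = m + 2 then
        (if r = 0 then
          (if c = 0 then 1/(2*q2*lam^2)
           else if c = 1 ∨ c = 2 then -(1/(2*q2*lam^2)) else 0)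
         else 0)
      else
        if r = 0 then
          (if c = 0 then lam*(1/(2*q2*lam^2))
           else if c = 1 then -(lam*(1/(2*q2*lam^2)))
           else if c = 2 then -(lam*(1/(2*q2*lam^2))) + 1/q1 else 0)
        else if r = 1 then
          (if c = 0 then lam*(1/(2*q2*lam^2))
           else if c = 1 ∨ c = 2 then -(lam*(1/(2*q2*lam^2))) else 0)
        else if r = 2 then (if c = 2 then 1/q1 else 0)
        else 0
    bias := fun j r =>
      if j = 1 then (if r = 0 ∨ r = 1 ∨ r = 2 then a else 0)
      else if j = m + 2 then (if r = 0 then sa*(1/(2*q2*lam^2)) + co 0 else 0)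
      else
        if r = 0 then a + lam*(sa*(1/(2*q2*lam^2)) + co (m + 1 - (j-1))) - sa/q1
        else if r = 1 then a + lam*(sa*(1/(2*q2*lam^2)) + co (m + 1 - (j-1)))
        else if r = 2 then a - sa/q1
        else 0 }

lemma hidden_succ (σ : ℝ → ℝ) (net : NeuralNet) (x : ℕ → ℝ) (i r : ℕ) :
    NeuralNet.hidden σ net x (i+1) r
      = σ ((∑ c ∈ Finset.range (net.dims i),
            net.weight (i + 1) r c * NeuralNet.hidden σ net x i c) + net.bias (i + 1) r) := rfl

lemma hidden_spec (σ : ℝ → ℝ) (q P : Polynomial ℝ) (a lam : ℝ)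
    (hσq : ∀ t, σ (a + t) = q.eval t)
    (hd : 2 ≤ q.natDegree) (hq1 : q.coeff 1 ≠ 0) (hq2 : q.coeff 2 ≠ 0) (hlam : lam ≠ 0)
    (n : ℕ) (w : ℕ → ℝ) (m : ℕ) (x : ℕ → ℝ) :
    ∀ j ≤ m,
      (NeuralNet.hidden σ
          (mkNet n a (σ a) (q.coeff 1) (q.coeff 2) lam w (fun i => P.coeff i) m) x (j+1)) 0
          = σ (a + lam * ((AZ q P (m+1) (∑ c ∈ Finset.range n, w c * x c) j lam).1
                + (AZ q P (m+1) (∑ c ∈ Finset.range n, w c * x c) j lam).2))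
      ∧ (NeuralNet.hidden σ
          (mkNet n a (σ a) (q.coeff 1) (q.coeff 2) lam w (fun i => P.coeff i) m) x (j+1)) 1
          = σ (a + lam * (AZ q P (m+1) (∑ c ∈ Finset.range n, w c * x c) j lam).1)
      ∧ (NeuralNet.hidden σ
          (mkNet n a (σ a) (q.coeff 1) (q.coeff 2) lam w (fun i => P.coeff i) m) x (j+1)) 2
          = σ (a + lam * (AZ q P (m+1) (∑ c ∈ Finset.range n, w c * x c) j lam).2) := by
  have hsa : σ a = q.eval 0 := by rw [← add_zero a, hσq]
  intro j hj
  induction j with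
  | zero =>
    simp only [NeuralNet.hidden, mkNet]
    norm_num
    simp only [AZ, zero_add]
    have hz : ∑ c ∈ Finset.range n, lam * w c * x c
        = lam * ∑ c ∈ Finset.range n, w c * x c := by
      rw [Finset.mul_sum]
      exact Finset.sum_congr rfl (fun c _ => mul_assoc lam (w c) (x c))
    refine ⟨?_, by simp, ?_⟩ <;> · congr 1; rw [hz]; ring
  | succ j ih =>
    obtain ⟨i0, i1, i2⟩ := ih (by omega)
    set A := (AZ q P (m+1) (∑ c ∈ Finset.range n, w c * x c) j lam).1 with hA
    set Z := (AZ q P (m+1) (∑ c ∈ Finset.range n, w c * x c) j lam).2 with hZ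
    have hM : Mfun q lam A Z
        = (q.eval (lam*(A+Z)) - q.eval (lam*A) - q.eval (lam*Z) + q.eval 0)
            / (2 * q.coeff 2 * lam^2) := by
      rw [eq_div_iff (mul_ne_zero (mul_ne_zero two_ne_zero hq2) (pow_ne_zero 2 hlam))]
      linear_combination - Mfun_spec q hd hq2 lam A Z
    have hR : Rfun q lam Z = (q.eval (lam*Z) - q.eval 0) / (q.coeff 1 * lam) := by
      rw [eq_div_iff (mul_ne_zero hq1 hlam)]
      linear_combination - Rfun_spec q hq1 lam Z
    have hdims : (mkNet n a (σ a) (q.coeff 1) (q.coeff 2) lam w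
        (fun i => P.coeff i) m).dims (j+1) = 6 := by simp [mkNet]
    have hw : ∀ r c, (mkNet n a (σ a) (q.coeff 1) (q.coeff 2) lam w
        (fun i => P.coeff i) m).weight (j+1+1) r c =
        (if r = 0 then
          (if c = 0 then lam*(1/(2*q.coeff 2*lam^2))
           else if c = 1 then -(lam*(1/(2*q.coeff 2*lam^2)))
           else if c = 2 then -(lam*(1/(2*q.coeff 2*lam^2))) + 1/q.coeff 1 else 0)
        else if r = 1 then
          (if c = 0 then lam*(1/(2*q.coeff 2*lam^2))
           else if c = 1 ∨ c = 2 then -(lam*(1/(2*q.coeff 2*lam^2))) else 0)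
        else if r = 2 then (if c = 2 then 1/q.coeff 1 else 0)
        else 0) := by
      intro r c
      simp only [mkNet]
      rw [if_neg (by omega), if_neg (by omega)]
    have hb : ∀ r, (mkNet n a (σ a) (q.coeff 1) (q.coeff 2) lam w
        (fun i => P.coeff i) m).bias (j+1+1) r =
        (if r = 0 then a + lam*(σ a*(1/(2*q.coeff 2*lam^2)) + P.coeff (m - j)) - σ a/q.coeff 1
        else if r = 1 then a + lam*(σ a*(1/(2*q.coeff 2*lam^2)) + P.coeff (m - j))
        else if r = 2 then a - σ a/q.coeff 1
        else 0) := by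
      intro r
      simp only [mkNet]
      rw [if_neg (by omega), if_neg (by omega)]
      simp only [show j + 1 + 1 - 1 = j + 1 from by omega,
        show m + 1 - (j + 1) = m - j from by omega]
    have hcoeff : (m + 1) - (j + 1) = m - j := by omega
    refine ⟨?_, ?_, ?_⟩ <;>
    · rw [hidden_succ, hdims]
      simp only [hw, hb]
      norm_num [Finset.sum_range_succ]
      simp only [i0, i1, i2]
      simp only [AZ, ← hA, ← hZ, hcoeff]
      simp only [hσq (lam * (A + Z)), hσq (lam * A), hσq (lam * Z), hsa]
      congr 1
      simp only [hM, hR]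
      field_simp
      ring

lemma output_spec (σ : ℝ → ℝ) (q P : Polynomial ℝ) (a lam : ℝ)
    (hσq : ∀ t, σ (a + t) = q.eval t)
    (hd : 2 ≤ q.natDegree) (hq1 : q.coeff 1 ≠ 0) (hq2 : q.coeff 2 ≠ 0) (hlam : lam ≠ 0)
    (n : ℕ) (w : ℕ → ℝ) (m : ℕ) (x : ℕ → ℝ) :
    NeuralNet.output σ (mkNet n a (σ a) (q.coeff 1) (q.coeff 2) lam w (fun i => P.coeff i) m) x
      = (AZ q P (m+1) (∑ c ∈ Finset.range n, w c * x c) (m+1) lam).1 := by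
  have hsa : σ a = q.eval 0 := by rw [← add_zero a, hσq]
  obtain ⟨i0, i1, i2⟩ := hidden_spec σ q P a lam hσq hd hq1 hq2 hlam n w m x m le_rfl
  set A := (AZ q P (m+1) (∑ c ∈ Finset.range n, w c * x c) m lam).1 with hA
  set Z := (AZ q P (m+1) (∑ c ∈ Finset.range n, w c * x c) m lam).2 with hZ
  have hM : Mfun q lam A Z
      = (q.eval (lam*(A+Z)) - q.eval (lam*A) - q.eval (lam*Z) + q.eval 0)
          / (2 * q.coeff 2 * lam^2) := by
    rw [eq_div_iff (mul_ne_zero (mul_ne_zero two_ne_zero hq2) (pow_ne_zero 2 hlam))]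
    linear_combination - Mfun_spec q hd hq2 lam A Z
  have hw : ∀ c, (mkNet n a (σ a) (q.coeff 1) (q.coeff 2) lam w
      (fun i => P.coeff i) m).weight (m+2) 0 c =
      (if c = 0 then 1/(2*q.coeff 2*lam^2)
       else if c = 1 ∨ c = 2 then -(1/(2*q.coeff 2*lam^2)) else 0) := by
    intro c
    simp only [mkNet]
    simp [show ¬(m+2 = 1) by omega]
  have hb : (mkNet n a (σ a) (q.coeff 1) (q.coeff 2) lam w
      (fun i => P.coeff i) m).bias (m+2) 0 =
      σ a * (1/(2*q.coeff 2*lam^2)) + P.coeff 0 := by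
    simp only [mkNet]
    simp [show ¬(m+2 = 1) by omega]
  have hdims : (mkNet n a (σ a) (q.coeff 1) (q.coeff 2) lam w
      (fun i => P.coeff i) m).dims (m+1) = 6 := by simp [mkNet]
  have hdepth : (mkNet n a (σ a) (q.coeff 1) (q.coeff 2) lam w
      (fun i => P.coeff i) m).depth = m + 2 := rfl
  unfold NeuralNet.output
  rw [hdepth, show m + 2 - 1 = m + 1 from rfl, hdims]
  norm_num [Finset.sum_range_succ, hw, hb]
  simp only [i0, i1, i2]
  simp only [AZ, ← hA, ← hZ, Nat.sub_self]
  simp only [hσq (lam * (A + Z)), hσq (lam * A), hσq (lam * Z), hsa]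
  simp only [hM]
  field_simp
  ring

lemma mkNet_width (n : ℕ) (a sa q1 q2 lam : ℝ) (w : ℕ → ℝ) (co : ℕ → ℝ) (m : ℕ) :
    (mkNet n a sa q1 q2 lam w co m).width = 6 := by
  unfold NeuralNet.width
  rw [show (mkNet n a sa q1 q2 lam w co m).depth - 1 = m + 1 from rfl]
  rw [Finset.sup_congr rfl (g := fun _ => 6)
    (fun i hi => by
      rcases Finset.mem_Icc.mp hi with ⟨h1, _⟩
      simp only [mkNet]
      rw [if_neg (by omega)])]
  exact Finset.sup_const ⟨1, Finset.mem_Icc.mpr ⟨le_refl 1, by omega⟩⟩ 6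

open MeasureTheory in
lemma exists_inj_linear (n : ℕ) (S : Set (Fin n → ℝ)) (hS : S.Finite) :
    ∃ w : Fin n → ℝ, Set.InjOn (fun v => ∑ i, w i * v i) S := by
  classical
  have key : ∀ d : Fin n → ℝ, d ≠ 0 →
      volume {w : Fin n → ℝ | ∑ i, w i * d i = 0} = 0 := by
    intro d hd
    obtain ⟨i0, hi0⟩ : ∃ i, d i ≠ 0 := by
      by_contra h; push_neg at h; exact hd (funext h)
    set φ : (Fin n → ℝ) →ₗ[ℝ] ℝ :=
      { toFun := fun w => ∑ i, w i * d i
        map_add' := by intro u v; simp [add_mul, Finset.sum_add_distrib]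
        map_smul' := by intro c u; simp [Finset.mul_sum, mul_assoc] } with hφ
    have hset : {w : Fin n → ℝ | ∑ i, w i * d i = 0} = (LinearMap.ker φ : Set _) := rfl
    rw [hset]
    apply MeasureTheory.Measure.addHaar_submodule
    intro htop
    have hmem : Pi.single i0 1 ∈ LinearMap.ker φ := htop ▸ Submodule.mem_top
    rw [LinearMap.mem_ker] at hmem
    have : φ (Pi.single i0 1) = d i0 := by
      simp [hφ, Pi.single_apply, ite_mul]
    exact hi0 (this ▸ hmem)
  set pairs : Set ((Fin n → ℝ) × (Fin n → ℝ)) := {p | p.1 ∈ S ∧ p.2 ∈ S ∧ p.1 ≠ p.2} with hpairs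
  have hpf : pairs.Finite := (hS.prod hS).subset (fun p hp => ⟨hp.1, hp.2.1⟩)
  set bad := ⋃ p ∈ pairs, {w : Fin n → ℝ | ∑ i, w i * (p.1 i - p.2 i) = 0} with hbad
  have hbad0 : volume bad = 0 := by
    rw [measure_biUnion_null_iff hpf.countable]
    intro p hp
    apply key
    intro h
    exact hp.2.2 (funext fun i => sub_eq_zero.mp (congrFun h i))
  have hne : bad ≠ Set.univ := by
    intro h
    exact isOpen_univ.measure_ne_zero volume Set.univ_nonempty (h ▸ hbad0)
  obtain ⟨w, hw⟩ := (Set.ne_univ_iff_exists_notMem bad).mp hne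
  refine ⟨w, fun u hu v hv he => ?_⟩
  by_contra hne'
  apply hw
  refine Set.mem_biUnion (show (u, v) ∈ pairs from ⟨hu, hv, hne'⟩) ?_
  simp only [Set.mem_setOf_eq]
  have : ∑ i, w i * (u i - v i) = ∑ i, w i * u i - ∑ i, w i * v i := by
    rw [← Finset.sum_sub_distrib]
    exact Finset.sum_congr rfl (fun i _ => by ring)
  dsimp only at he
  rw [this, he]
  exact sub_self _

lemma exists_good_base (p : Polynomial ℝ) (hp : 2 ≤ p.natDegree) :
    ∃ a : ℝ, (Polynomial.taylor a p).coeff 1 ≠ 0 ∧ (Polynomial.taylor a p).coeff 2 ≠ 0 := by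
  have hp0 : p ≠ 0 := fun h => by simp [h] at hp
  have hd1 : p.derivative ≠ 0 := by
    intro h
    have h1 := Polynomial.coeff_derivative p (p.natDegree - 1)
    rw [h, show p.natDegree - 1 + 1 = p.natDegree from by omega] at h1
    simp only [Polynomial.coeff_zero] at h1
    have hne2 : ((p.natDegree - 1 : ℕ) : ℝ) + 1 ≠ 0 := by positivity
    have := mul_ne_zero (Polynomial.leadingCoeff_ne_zero.mpr hp0) hne2
    rw [Polynomial.leadingCoeff] at this
    exact this h1.symm
  have hd2 : Polynomial.hasseDeriv 2 p ≠ 0 := by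
    intro h
    have h1 : (Polynomial.hasseDeriv 2 p).coeff (p.natDegree - 2)
        = ((p.natDegree - 2 + 2).choose 2 : ℝ) * p.coeff (p.natDegree - 2 + 2) :=
      Polynomial.hasseDeriv_coeff 2 p _
    rw [h, show p.natDegree - 2 + 2 = p.natDegree from by omega] at h1
    simp only [Polynomial.coeff_zero] at h1
    have hc : ((p.natDegree.choose 2 : ℕ) : ℝ) ≠ 0 :=
      Nat.cast_ne_zero.mpr (Nat.choose_pos hp).ne'
    have := mul_ne_zero hc (Polynomial.leadingCoeff_ne_zero.mpr hp0)
    rw [Polynomial.leadingCoeff] at this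
    exact this h1.symm
  have : ∃ a : ℝ, (p.derivative * Polynomial.hasseDeriv 2 p).eval a ≠ 0 := by
    by_contra h
    push_neg at h
    have : p.derivative * Polynomial.hasseDeriv 2 p = 0 :=
      Polynomial.funext (fun r => by rw [h r]; simp)
    exact mul_ne_zero hd1 hd2 this
  obtain ⟨a, ha⟩ := this
  rw [Polynomial.eval_mul] at ha
  refine ⟨a, ?_, ?_⟩
  · rw [Polynomial.taylor_coeff_one]
    exact left_ne_zero_of_mul ha
  · rw [Polynomial.taylor_coeff]
    exact right_ne_zero_of_mul ha

end S3Aux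

/-- width-6 UAT with (decimal-)truncated inputs, non-affine polynomial activation. -/
theorem statement3 (σ : ℝ → ℝ) (hσ : IsNonAffinePolyFun σ)
    (n : ℕ) (K : Set (Fin n → ℝ)) (hK : IsCompact K)
    (f : (Fin n → ℝ) → ℝ) (hf : ContinuousOn f K) :
    ∀ ε : ℝ, 0 < ε →
      ∃ (net : NeuralNet) (g : (Fin n → ℝ) → ℝ),
        NeuralNet.RepresentsTrunc σ net 10 g ∧ net.width = 6 ∧
        ∀ x ∈ K, |f x - g x| < ε := by
  intro ε hε
  classical
  obtain ⟨p, hp2, hσp⟩ := hσ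
  obtain ⟨a, hq1, hq2⟩ := S3Aux.exists_good_base p hp2
  set q := Polynomial.taylor a p with hqdef
  have hσq : ∀ t, σ (a + t) = q.eval t := by
    intro t
    rw [hσp, hqdef, Polynomial.taylor_eval, add_comm]
  have hqd : 2 ≤ q.natDegree := by rw [hqdef, Polynomial.natDegree_taylor]; exact hp2
  -- uniform continuity of f on K
  have huc := hK.uniformContinuousOn_of_continuous hf
  rw [Metric.uniformContinuousOn_iff] at huc
  obtain ⟨δ, hδ, hδ2⟩ := huc (ε/2) (half_pos hε)
  -- choice of truncation precision
  obtain ⟨N, hN⟩ : ∃ N : ℕ, ((1:ℝ)/10)^N < δ := exists_pow_lt_of_lt_one hδ (by norm_num)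
  set b : ℝ := (10:ℝ)^(N:ℤ) with hbdef
  have hb : (0:ℝ) < b := by positivity
  have hbpow : b = (10:ℝ)^(N:ℕ) := by rw [hbdef, zpow_natCast]
  set T : (Fin n → ℝ) → (Fin n → ℝ) := fun x i => ((⌊b * x i⌋ : ℤ) : ℝ) with hT
  -- the truncated image is finite
  have hSfin : (T '' K).Finite := by
    obtain ⟨C, hC⟩ := hK.isBounded.subset_closedBall 0
    refine Set.Finite.subset (Set.Finite.pi (fun i : Fin n =>
      (Set.finite_Icc (⌊-(b*C)⌋) ⌊b*C⌋).image (fun k : ℤ => (k:ℝ)))) ?_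
    rintro s ⟨x, hx, rfl⟩
    intro i _
    refine ⟨⌊b * x i⌋, ?_, rfl⟩
    have hxi : |x i| ≤ C := by
      have h1 : dist (x i) 0 ≤ dist x 0 := dist_le_pi_dist x 0 i
      have h2 : dist x 0 ≤ C := by
        have := hC hx
        rwa [Metric.mem_closedBall] at this
      rw [Real.dist_eq, sub_zero] at h1
      linarith
    rw [abs_le] at hxi
    constructor
    · exact Int.floor_le_floor (by nlinarith)
    · exact Int.floor_le_floor (by nlinarith)
  -- injective linear encoding on the finite truncated image
  obtain ⟨w, hwinj⟩ := S3Aux.exists_inj_linear n (T '' K) hSfin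
  set e : (Fin n → ℝ) → ℝ := fun v => ∑ i, w i * v i with hedef
  -- representatives
  have hrep : ∀ s ∈ T '' K, ∃ x ∈ K, T x = s := fun s hs => hs
  set rep : (Fin n → ℝ) → (Fin n → ℝ) :=
    fun s => if h : ∃ x ∈ K, T x = s then h.choose else 0 with hrepdef
  have hrep1 : ∀ s ∈ T '' K, rep s ∈ K ∧ T (rep s) = s := by
    intro s hs
    obtain ⟨x, hx, hxs⟩ := hs
    have hex : ∃ x ∈ K, T x = s := ⟨x, hx, hxs⟩
    rw [hrepdef]
    simp only [dif_pos hex]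
    exact ⟨hex.choose_spec.1, hex.choose_spec.2⟩
  -- interpolation polynomial
  set P : Polynomial ℝ :=
    Lagrange.interpolate hSfin.toFinset e (fun s => f (rep s)) with hPdef
  have hPval : ∀ s ∈ T '' K, P.eval (e s) = f (rep s) := by
    intro s hs
    refine Lagrange.eval_interpolate_at_node _ ?_ (hSfin.mem_toFinset.mpr hs)
    rw [Set.Finite.coe_toFinset]
    exact hwinj
  set m := P.natDegree with hmdef
  -- choose the scale parameter lam
  have key : ∀ᶠ lam in nhds (0:ℝ), ∀ s ∈ T '' K,
      |(S3Aux.AZ q P (m+1) (e s) (m+1) lam).1 - f (rep s)| < ε/2 := by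
    rw [Filter.eventually_all_finite hSfin]
    intro s hs
    have hc : Continuous (fun lam => (S3Aux.AZ q P (m+1) (e s) (m+1) lam).1) :=
      continuous_fst.comp (S3Aux.AZ_cont q P (m+1) (e s) (m+1))
    have h0 : (S3Aux.AZ q P (m+1) (e s) (m+1) 0).1 = f (rep s) := by
      rw [hmdef, S3Aux.AZ_eval_zero q P (e s) hq1 hq2]
      exact hPval s hs
    have h2 := Metric.tendsto_nhds.mp (hc.tendsto 0) (ε/2) (half_pos hε)
    refine h2.mono (fun lam hlam => ?_)
    rwa [Real.dist_eq, h0] at hlam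
  obtain ⟨lam, hlamS, hlamne⟩ :=
    ((key.filter_mono nhdsWithin_le_nhds).and
      (eventually_mem_nhdsWithin (s := {(0:ℝ)}ᶜ))).exists
  have hlam0 : lam ≠ 0 := hlamne
  -- the network
  set w' : ℕ → ℝ := fun c => if h : c < n then w ⟨c, h⟩ else 0 with hw'def
  set net := S3Aux.mkNet n a (σ a) (q.coeff 1) (q.coeff 2) lam w' (fun i => P.coeff i) m
    with hnetdef
  refine ⟨net,
    fun y => net.output σ (fun i => if h : i < n then ((⌊(10:ℝ)^(N:ℤ) * y ⟨i, h⟩⌋ : ℤ) : ℝ) else 0),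
    ⟨(N:ℤ), ?_, ?_, fun y => rfl⟩, S3Aux.mkNet_width _ _ _ _ _ _ _ _ _, ?_⟩
  · rw [hnetdef]; exact Nat.le_add_left 1 (m+1)
  · rw [hnetdef]; simp [S3Aux.mkNet]
  · -- approximation
    intro x hx
    have hs : T x ∈ T '' K := ⟨x, hx, rfl⟩
    obtain ⟨hrepK, hrepT⟩ := hrep1 _ hs
    -- value of the network
    set xin : ℕ → ℝ :=
      fun i => if h : i < n then ((⌊(10:ℝ)^(N:ℤ) * x ⟨i, h⟩⌋ : ℤ) : ℝ) else 0 with hxin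
    have hz : (∑ c ∈ Finset.range n, w' c * xin c) = e (T x) := by
      have h1 : ∀ i : Fin n, w' (i : ℕ) * xin (i : ℕ) = w i * T x i := by
        intro i
        have hi : (i:ℕ) < n := i.isLt
        simp [hw'def, hxin, hT, hbdef, hi]
      calc ∑ c ∈ Finset.range n, w' c * xin c
          = ∑ i : Fin n, w' (i:ℕ) * xin (i:ℕ) :=
            (Fin.sum_univ_eq_sum_range (fun c => w' c * xin c) n).symm
        _ = ∑ i : Fin n, w i * T x i := Finset.sum_congr rfl (fun i _ => h1 i)
        _ = e (T x) := rfl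
    have hout : net.output σ xin = (S3Aux.AZ q P (m+1) (e (T x)) (m+1) lam).1 := by
      rw [hnetdef, S3Aux.output_spec σ q P a lam hσq hqd hq1 hq2 hlam0, hz]
    show |f x - net.output σ xin| < ε
    rw [hout]
    -- distance between x and its representative
    have hdist : dist x (rep (T x)) < δ := by
      rw [dist_pi_lt_iff hδ]
      intro i
      have hfl : ⌊b * x i⌋ = ⌊b * rep (T x) i⌋ := by
        have := congrFun hrepT i
        simp only [hT] at this
        exact_mod_cast this.symm
      have habs : |b * x i - b * rep (T x) i| < 1 :=
        Int.abs_sub_lt_one_of_floor_eq_floor hfl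
      rw [Real.dist_eq]
      have h3 : |x i - rep (T x) i| * b < 1 := by
        calc |x i - rep (T x) i| * b = |x i - rep (T x) i| * |b| := by
              rw [abs_of_pos hb]
          _ = |b * x i - b * rep (T x) i| := by rw [← abs_mul]; ring_nf
          _ < 1 := habs
      have h4 : |x i - rep (T x) i| < 1 / b := by
        rw [lt_div_iff₀ hb]; exact h3
      have h5 : (1:ℝ) / b = ((1:ℝ)/10)^N := by
        rw [hbpow, div_pow, one_pow]
      linarith [hN, h4, h5 ▸ h4]
    have h6 : dist (f x) (f (rep (T x))) < ε/2 := hδ2 x hx (rep (T x)) hrepK hdist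
    rw [Real.dist_eq] at h6
    have h7 := hlamS (T x) hs
    calc |f x - (S3Aux.AZ q P (m+1) (e (T x)) (m+1) lam).1|
        = |(f x - f (rep (T x))) + (f (rep (T x)) - (S3Aux.AZ q P (m+1) (e (T x)) (m+1) lam).1)| := by
          ring_nf
      _ ≤ |f x - f (rep (T x))| + |f (rep (T x)) - (S3Aux.AZ q P (m+1) (e (T x)) (m+1) lam).1| :=
          abs_add_le _ _
      _ < ε/2 + ε/2 := by
          refine add_lt_add h6 ?_
          rw [abs_sub_comm]
          exact h7
      _ = ε := by ring
end

section
/- Suppose σ : ℝ → ℝ is a non-affine polynomial. Let K ⊆ ℝⁿ be compact and f : K → ℝ continuous. Then for every ε > 0 there is a function g : ℝⁿ → ℝ represented by a σ-activated neural network with binary-truncated inputs of width 6 such that |f(x) − g(x)| < ε for all x ∈ K. -/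
open scoped BigOperators
open MeasureTheory
open scoped Classical

/-!
Expand `σ (a + u) = c₀ + c₁ u + u² ψ u` at a point `a` where `c₁ = σ'(a)` and `c₂ = ψ 0 = σ''(a)/2`
are both nonzero. As `h → 0`, `(σ (a + h t) - c₀) / (h c₁) → t`, and by polarization
`σ (a + h (s + t)) + σ (a - h (s + t)) - σ (a + h (s - t)) - σ (a - h (s - t))` divided by
`8 h² c₂` tends to `s t`. So a hidden layer of six neurons carries a register `t` through
unchanged and updates a register `s` to `s t + b`: stacked, these layers run Horner's scheme for
any polynomial in `t`.

Truncated at scale `2 ^ κ`, the inputs from the compact set `K` take finitely many values, and for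
large `κ` the function `f` varies by less than `ε / 2` on each fibre of the truncation. A generic
linear form `t = ∑ τ ^ i v i` separates these finitely many values, so Lagrange interpolation
gives a polynomial in `t` matching `f` at one representative of each fibre, and a small `h` makes
the Horner network `ε / 2`-close to it there.
-/

open Filter Topology Finset Polynomial NeuralNet

namespace Polynomial

theorem hasseDeriv_ne_zero {R : Type*} [CommRing R] [IsDomain R] [CharZero R] {p : R[X]} {k : ℕ}
    (hk : k ≤ p.natDegree) (hp : p ≠ 0) : hasseDeriv k p ≠ 0 := by
  intro h
  have := hasseDeriv_coeff (f := p) k (p.natDegree - k)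
  rw [h, Nat.sub_add_cancel hk, coeff_zero] at this
  exact mul_ne_zero (Nat.cast_ne_zero.mpr (Nat.choose_pos hk).ne') (leadingCoeff_ne_zero.mpr hp)
    this.symm

theorem exists_taylor_coeff_one_ne_zero_and_coeff_two_ne_zero {R : Type*} [CommRing R] [IsDomain R]
    [CharZero R] [Infinite R] {p : R[X]} (hp : 2 ≤ p.natDegree) :
    ∃ a, (taylor a p).coeff 1 ≠ 0 ∧ (taylor a p).coeff 2 ≠ 0 := by
  have hp0 : p ≠ 0 := by rintro rfl; simp at hp
  have hprod : hasseDeriv 1 p * hasseDeriv 2 p ≠ 0 :=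
    mul_ne_zero (hasseDeriv_ne_zero (by omega) hp0) (hasseDeriv_ne_zero hp hp0)
  obtain ⟨a, ha⟩ : ∃ a, (hasseDeriv 1 p * hasseDeriv 2 p).eval a ≠ 0 := by
    by_contra! h
    exact hprod (zero_of_eval_zero _ h)
  rw [eval_mul] at ha
  exact ⟨a, by simpa [taylor_coeff] using left_ne_zero_of_mul ha,
    by simpa [taylor_coeff] using right_ne_zero_of_mul ha⟩

theorem eval_eq_coeff_zero_add_coeff_one_mul_add {R : Type*} [CommRing R] (q : R[X]) (s : R) :
    q.eval s = q.coeff 0 + q.coeff 1 * s + s ^ 2 * q.divX.divX.eval s := by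
  conv_lhs => rw [← divX_mul_X_add q, ← divX_mul_X_add q.divX]
  simp only [eval_add, eval_mul, eval_X, eval_C, coeff_divX, zero_add]
  ring

end Polynomial

section Gadgets

variable {φ ψ : ℝ → ℝ} {c₀ c₁ : ℝ}

theorem tendsto_self_mul_nhdsNE_zero {u : ℝ → ℝ} {u₀ : ℝ} (hu : Tendsto u (𝓝[≠] 0) (𝓝 u₀)) :
    Tendsto (fun h => h * u h) (𝓝[≠] 0) (𝓝 0) := by
  simpa using (tendsto_id.mono_left nhdsWithin_le_nhds).mul hu

theorem tendsto_sub_div_of_expansion (hφ : ∀ s, φ s = c₀ + c₁ * s + s ^ 2 * ψ s)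
    (hψ : ContinuousAt ψ 0) {u : ℝ → ℝ} {u₀ : ℝ} (hu : Tendsto u (𝓝[≠] 0) (𝓝 u₀)) :
    Tendsto (fun h => (φ (h * u h) - c₀) / h) (𝓝[≠] 0) (𝓝 (c₁ * u₀)) := by
  have hlim : Tendsto (fun h => c₁ * u h + h * u h * (u h * ψ (h * u h))) (𝓝[≠] 0)
      (𝓝 (c₁ * u₀ + 0 * (u₀ * ψ 0))) :=
    (hu.const_mul c₁).add ((tendsto_self_mul_nhdsNE_zero hu).mul
      (hu.mul (hψ.tendsto.comp (tendsto_self_mul_nhdsNE_zero hu))))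
  rw [zero_mul, add_zero] at hlim
  refine hlim.congr' ?_
  filter_upwards [self_mem_nhdsWithin] with h (hh : h ≠ 0)
  rw [hφ]
  field_simp
  ring

theorem tendsto_add_neg_sub_div_sq_of_expansion (hφ : ∀ s, φ s = c₀ + c₁ * s + s ^ 2 * ψ s)
    (hψ : ContinuousAt ψ 0) {u : ℝ → ℝ} {u₀ : ℝ} (hu : Tendsto u (𝓝[≠] 0) (𝓝 u₀)) :
    Tendsto (fun h => (φ (h * u h) + φ (-(h * u h)) - 2 * c₀) / h ^ 2) (𝓝[≠] 0)
      (𝓝 (2 * ψ 0 * u₀ ^ 2)) := by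
  have hv := tendsto_self_mul_nhdsNE_zero hu
  have hv' : Tendsto (fun h => -(h * u h)) (𝓝[≠] 0) (𝓝 0) := by simpa using hv.neg
  have hlim : Tendsto (fun h => u h ^ 2 * (ψ (h * u h) + ψ (-(h * u h)))) (𝓝[≠] 0)
      (𝓝 (u₀ ^ 2 * (ψ 0 + ψ 0))) :=
    (hu.pow 2).mul ((hψ.tendsto.comp hv).add (hψ.tendsto.comp hv'))
  rw [show u₀ ^ 2 * (ψ 0 + ψ 0) = 2 * ψ 0 * u₀ ^ 2 by ring] at hlim
  refine hlim.congr' ?_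
  filter_upwards [self_mem_nhdsWithin] with h (hh : h ≠ 0)
  rw [hφ, hφ]
  field_simp
  ring

end Gadgets

section RegisterNet

variable (σ : ℝ → ℝ) (a : ℝ) (inW : ℕ → ℝ × ℝ) (αS αT : ℕ → ℝ) (βT : ℝ) (b : ℕ → ℝ) (m : ℕ)

/-- Each hidden layer stores two registers `(s, t)`: neuron `r` computes
`σ (a + (inW r).1 * s + (inW r).2 * t)`, and the registers of the next layer are read off linearly
(through `αS`, `αT`, with offsets `b j` and `βT`). In `registerNet` that readout is folded into the
weights of the following layer; the first layer reads `s = b 0` and `t = ∑ W k * x k`. -/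
def registerLayer (st : ℝ × ℝ) (r : ℕ) : ℝ :=
  σ (a + ((inW r).1 * st.1 + (inW r).2 * st.2))

def registerState (t₀ : ℝ) : ℕ → ℝ × ℝ
  | 0 => (b 0, t₀)
  | j + 1 =>
    (∑ k ∈ range m, αS k * registerLayer σ a inW (registerState t₀ j) k + b (j + 1),
      ∑ k ∈ range m, αT k * registerLayer σ a inW (registerState t₀ j) k + βT)

def registerNet (n L : ℕ) (W : ℕ → ℝ) : NeuralNet where
  depth := L + 1
  dims i := if i = 0 then n else m
  weight j r k :=
    if j = 1 then (inW r).2 * W k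
    else if j = L + 1 then αS k
    else (inW r).1 * αS k + (inW r).2 * αT k
  bias j r :=
    if j = 1 then a + (inW r).1 * b 0
    else if j = L + 1 then b L
    else a + ((inW r).1 * b (j - 1) + (inW r).2 * βT)

variable {m}

theorem hidden_registerNet {n L : ℕ} (W : ℕ → ℝ) (x : ℕ → ℝ) {j : ℕ} (hj : j < L) :
    (registerNet a inW αS αT βT b m n L W).hidden σ x (j + 1) =
      registerLayer σ a inW (registerState σ a inW αS αT βT b m (∑ k ∈ range n, W k * x k) j) := by
  induction j with
  | zero =>
    funext r
    simp only [NeuralNet.hidden, registerNet, registerLayer, registerState, if_true]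
    congr 1
    simp only [mul_assoc, ← mul_sum]
    ring
  | succ j ih =>
    funext r
    rw [NeuralNet.hidden, ih (by omega)]
    simp only [registerNet, registerLayer, registerState, if_neg (show j + 1 ≠ 0 by omega),
      if_neg (show j + 1 + 1 ≠ 1 by omega), if_neg (show j + 1 + 1 ≠ L + 1 by omega),
      Nat.add_sub_cancel]
    congr 1
    simp only [add_mul, sum_add_distrib, mul_assoc, ← mul_sum]
    ring

theorem output_registerNet {n L : ℕ} (hL : 1 ≤ L) (W : ℕ → ℝ) (x : ℕ → ℝ) :
    (registerNet a inW αS αT βT b m n L W).output σ x =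
      (registerState σ a inW αS αT βT b m (∑ k ∈ range n, W k * x k) L).1 := by
  obtain ⟨L, rfl⟩ : ∃ L', L = L' + 1 := ⟨L - 1, by omega⟩
  rw [output, show (registerNet a inW αS αT βT b m n (L + 1) W).depth - 1 = L + 1 from rfl,
    hidden_registerNet σ a inW αS αT βT b W x (Nat.lt_succ_self L)]
  simp [registerNet, registerState]

theorem width_registerNet {n L : ℕ} (hL : 1 ≤ L) (W : ℕ → ℝ) :
    (registerNet a inW αS αT βT b m n L W).width = m := by
  refine le_antisymm (Finset.sup_le fun i hi => ?_) ?_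
  · simp [registerNet, show i ≠ 0 by grind]
  · exact le_of_eq_of_le (by simp [registerNet])
      (Finset.le_sup (f := (registerNet a inW αS αT βT b m n L W).dims) (b := 1)
        (by simpa [registerNet]))

end RegisterNet

def hornerSeq (b : ℕ → ℝ) (t : ℝ) : ℕ → ℝ
  | 0 => b 0
  | j + 1 => hornerSeq b t j * t + b (j + 1)

theorem hornerSeq_eq_sum (b : ℕ → ℝ) (t : ℝ) (j : ℕ) :
    hornerSeq b t j = ∑ i ∈ range (j + 1), b i * t ^ (j - i) := by
  induction j with
  | zero => simp [hornerSeq]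
  | succ j ih =>
    rw [hornerSeq, ih, sum_range_succ _ (j + 1), sum_mul, Nat.sub_self, pow_zero, mul_one]
    congr 1
    refine sum_congr rfl fun i hi => ?_
    rw [mul_assoc, ← pow_succ, Nat.sub_add_comm (Nat.lt_succ_iff.mp (mem_range.mp hi))]

theorem hornerSeq_coeff_eq_eval (q : ℝ[X]) {L : ℕ} (hq : q.natDegree ≤ L) (t : ℝ) :
    hornerSeq (fun i => q.coeff (L - i)) t L = q.eval t := by
  rw [hornerSeq_eq_sum, eval_eq_sum_range' (Nat.lt_succ_of_le hq), ← sum_range_reflect]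
  refine sum_congr rfl fun i hi => ?_
  rw [show L - (L + 1 - 1 - i) = i by grind]

section HornerNet

/-- Neurons `0`–`3` evaluate `σ` at `a ± h (s + t)` and `a ± h (s - t)`, neuron `4` at `a + h t`;
neuron `5` is idle and only pads the width to `6`. -/
def gadgetDir : ℕ → ℝ × ℝ
  | 0 => (1, 1)
  | 1 => (-1, -1)
  | 2 => (1, -1)
  | 3 => (-1, 1)
  | 4 => (0, 1)
  | _ => (0, 0)

variable (σ : ℝ → ℝ) (a c₀ c₁ c₂ : ℝ) (b : ℕ → ℝ)

noncomputable def hornerState (t₀ h : ℝ) : ℕ → ℝ × ℝ :=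
  registerState σ a (fun r => h • gadgetDir r)
    (fun k => (gadgetDir k).1 * (gadgetDir k).2 / (8 * h ^ 2 * c₂))
    (fun k => if k = 4 then 1 / (h * c₁) else 0) (-c₀ / (h * c₁)) b 6 t₀

theorem hornerState_succ (t₀ h : ℝ) (j : ℕ) :
    let s := (hornerState σ a c₀ c₁ c₂ b t₀ h j).1
    let t := (hornerState σ a c₀ c₁ c₂ b t₀ h j).2
    hornerState σ a c₀ c₁ c₂ b t₀ h (j + 1) =
      (((σ (a + h * (s + t)) + σ (a + -(h * (s + t))) - 2 * c₀) / h ^ 2 -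
          (σ (a + h * (s - t)) + σ (a + -(h * (s - t))) - 2 * c₀) / h ^ 2) / (8 * c₂) + b (j + 1),
        (σ (a + h * t) - c₀) / h / c₁) := by
  rw [hornerState, registerState, ← hornerState]
  generalize hornerState σ a c₀ c₁ c₂ b t₀ h j = st
  simp only [registerLayer, sum_range_succ, sum_range_zero]
  simp only [gadgetDir, Prod.smul_mk, smul_eq_mul]
  ext <;> norm_num <;> ring_nf

theorem tendsto_hornerState {ψ : ℝ → ℝ} (hσ : ∀ u, σ (a + u) = c₀ + c₁ * u + u ^ 2 * ψ u)
    (hψ : ContinuousAt ψ 0) (hψ₀ : ψ 0 = c₂) (hc₁ : c₁ ≠ 0) (hc₂ : c₂ ≠ 0) (t₀ : ℝ) (j : ℕ) :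
    Tendsto (fun h => hornerState σ a c₀ c₁ c₂ b t₀ h j) (𝓝[≠] 0) (𝓝 (hornerSeq b t₀ j, t₀)) := by
  subst hψ₀
  induction j with
  | zero => exact tendsto_const_nhds
  | succ j ih =>
    simp only [hornerState_succ]
    have hs := ih.fst_nhds
    have ht := ih.snd_nhds
    have hprod := (tendsto_add_neg_sub_div_sq_of_expansion hσ hψ (hs.add ht)).sub
      (tendsto_add_neg_sub_div_sq_of_expansion hσ hψ (hs.sub ht))
    refine Tendsto.prodMk_nhds ?_ ?_
    · convert (hprod.div_const (8 * ψ 0)).add_const (b (j + 1)) using 2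
      rw [hornerSeq]
      field_simp
      ring
    · convert (tendsto_sub_div_of_expansion hσ hψ ht).div_const c₁ using 2
      field_simp

noncomputable def hornerNet (n L : ℕ) (W : ℕ → ℝ) (h : ℝ) : NeuralNet :=
  registerNet a (fun r => h • gadgetDir r)
    (fun k => (gadgetDir k).1 * (gadgetDir k).2 / (8 * h ^ 2 * c₂))
    (fun k => if k = 4 then 1 / (h * c₁) else 0) (-c₀ / (h * c₁)) b 6 n L W

theorem output_hornerNet {n L : ℕ} (hL : 1 ≤ L) (W : ℕ → ℝ) (h : ℝ) (x : ℕ → ℝ) :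
    (hornerNet a c₀ c₁ c₂ b n L W h).output σ x =
      (hornerState σ a c₀ c₁ c₂ b (∑ k ∈ range n, W k * x k) h L).1 :=
  output_registerNet σ a _ _ _ _ b hL W x

theorem width_hornerNet {n L : ℕ} (hL : 1 ≤ L) (W : ℕ → ℝ) (h : ℝ) :
    (hornerNet a c₀ c₁ c₂ b n L W h).width = 6 :=
  width_registerNet a _ _ _ _ b hL W

end HornerNet

theorem exists_injOn_sum_pow_mul {n : ℕ} (S : Finset (Fin n → ℝ)) :
    ∃ t : ℝ, Set.InjOn (fun v : Fin n → ℝ => ∑ i : Fin n, t ^ (i : ℕ) * v i) S := by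
  let P : (Fin n → ℝ) → ℝ[X] := fun v => ∑ i, C (v i) * X ^ (i : ℕ)
  have hP : ∀ v, v ≠ 0 → P v ≠ 0 := by
    intro v hv hPv
    obtain ⟨i, hi⟩ := Function.ne_iff.mp hv
    refine hi ?_
    have := congrArg (coeff · i) hPv
    simpa [P, finsetSum_coeff, coeff_C_mul_X_pow, Fin.val_inj] using this
  have hprod : ∏ vw ∈ S.offDiag, P (vw.1 - vw.2) ≠ 0 :=
    prod_ne_zero_iff.mpr fun vw hvw =>
      hP _ (sub_ne_zero.mpr (mem_offDiag.mp hvw).2.2)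
  obtain ⟨t, ht⟩ : ∃ t, (∏ vw ∈ S.offDiag, P (vw.1 - vw.2)).eval t ≠ 0 := by
    by_contra! h
    exact hprod (zero_of_eval_zero _ h)
  refine ⟨t, fun v hv w hw hvw => by_contra fun hne => ?_⟩
  rw [eval_prod, prod_ne_zero_iff] at ht
  refine ht (v, w) (mem_offDiag.mpr ⟨hv, hw, hne⟩) ?_
  simp only [P, eval_finsetSum, eval_mul, eval_C, eval_pow, eval_X, Pi.sub_apply, sub_mul,
    sum_sub_distrib, sub_eq_zero]
  simpa only [mul_comm] using hvw

theorem sum_range_mul_dite_lt {n : ℕ} (W : ℕ → ℝ) (x : Fin n → ℝ) :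
    ∑ k ∈ range n, W k * (if h : k < n then x ⟨k, h⟩ else 0) = ∑ i : Fin n, W i * x i := by
  rw [← Fin.sum_univ_eq_sum_range]
  simp

theorem exists_represents_width_six_of_finset {σ : ℝ → ℝ} (hσ : IsNonAffinePolyFun σ) {n : ℕ}
    (S : Finset (Fin n → ℝ)) (y : (Fin n → ℝ) → ℝ) {ε : ℝ} (hε : 0 < ε) :
    ∃ (net : NeuralNet) (g : (Fin n → ℝ) → ℝ),
      net.Represents σ g ∧ net.width = 6 ∧ ∀ x ∈ S, |y x - g x| < ε := by
  obtain ⟨p, hp, hσp⟩ := hσ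
  obtain ⟨a, hc₁, hc₂⟩ := exists_taylor_coeff_one_ne_zero_and_coeff_two_ne_zero hp
  set T := taylor a p
  have hexp (u : ℝ) : σ (a + u) = T.coeff 0 + T.coeff 1 * u + u ^ 2 * T.divX.divX.eval u := by
    rw [← eval_eq_coeff_zero_add_coeff_one_mul_add, taylor_eval, hσp, add_comm]
  have hψ₀ : T.divX.divX.eval 0 = T.coeff 2 := by simp [← coeff_zero_eq_eval_zero, coeff_divX]
  obtain ⟨t, ht⟩ := exists_injOn_sum_pow_mul S
  set q := Lagrange.interpolate S (fun v => ∑ i : Fin n, t ^ (i : ℕ) * v i) y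
  set L := max 1 q.natDegree
  set b : ℕ → ℝ := fun i => q.coeff (L - i)
  let net (h : ℝ) := hornerNet a (T.coeff 0) (T.coeff 1) (T.coeff 2) b n L (t ^ ·) h
  let g (h : ℝ) (x : Fin n → ℝ) := (net h).output σ (fun i => if hi : i < n then x ⟨i, hi⟩ else 0)
  have hlim (x) (hx : x ∈ S) : Tendsto (g · x) (𝓝[≠] 0) (𝓝 (y x)) := by
    have := (tendsto_hornerState σ a _ _ _ b hexp T.divX.divX.continuous.continuousAt hψ₀ hc₁ hc₂
      (∑ i : Fin n, t ^ (i : ℕ) * x i) L).fst_nhds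
    rw [hornerSeq_coeff_eq_eval q (le_max_right _ _), Lagrange.eval_interpolate_at_node y ht hx]
      at this
    refine this.congr fun h => ?_
    rw [← sum_range_mul_dite_lt]
    exact (output_hornerNet σ _ _ _ _ _ (le_max_left 1 q.natDegree) _ _ _).symm
  obtain ⟨h, hh⟩ := ((eventually_all_finset S).mpr
    fun x hx => (hlim x hx).eventually (Metric.ball_mem_nhds _ hε)).exists
  refine ⟨net h, g h, ⟨Nat.le_add_left _ _, rfl, fun _ => rfl⟩,
    width_hornerNet _ _ _ _ _ (le_max_left _ _) _ _, fun x hx => ?_⟩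
  simpa [abs_sub_comm, Real.dist_eq] using hh x hx

section Truncation

noncomputable def truncate {ι : Type*} (c : ℝ) (x : ι → ℝ) : ι → ℝ := fun i => ⌊c * x i⌋

variable {ι : Type*} [Fintype ι]

theorem finite_image_truncate (c : ℝ) {K : Set (ι → ℝ)} (hK : Bornology.IsBounded K) :
    (truncate c '' K).Finite := by
  obtain ⟨R, hR⟩ := isBounded_iff_forall_norm_le.mp hK
  refine (Set.Finite.pi (t := fun _ => ((↑) : ℤ → ℝ) '' Set.Icc ⌊-(|c| * R)⌋ ⌊|c| * R⌋)
    fun _ => (Set.finite_Icc _ _).image _).subset ?_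
  rintro _ ⟨x, hx, rfl⟩ i -
  have hxi : |c * x i| ≤ |c| * R := by
    rw [abs_mul]
    exact mul_le_mul_of_nonneg_left ((norm_le_pi_norm x i).trans (hR x hx)) (abs_nonneg c)
  exact ⟨_, ⟨Int.floor_mono (neg_le_of_abs_le hxi), Int.floor_mono (le_of_abs_le hxi)⟩, rfl⟩

theorem dist_lt_of_truncate_eq {c : ℝ} (hc : 0 < c) {x y : ι → ℝ}
    (h : truncate c x = truncate c y) : dist x y < 1 / c := by
  refine (dist_pi_lt_iff (by positivity)).mpr fun i => ?_
  have hfloor : ⌊c * x i⌋ = ⌊c * y i⌋ := Int.cast_injective (congrFun h i)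
  have := Int.abs_sub_lt_one_of_floor_eq_floor hfloor
  rw [← mul_sub, abs_mul, abs_of_pos hc] at this
  rw [Real.dist_eq, lt_div_iff₀ hc]
  linarith

end Truncation

theorem NeuralNet.Represents.representsTrunc {σ : ℝ → ℝ} {net : NeuralNet} {d : ℕ}
    {g : (Fin d → ℝ) → ℝ} (hg : net.Represents σ g) (base : ℝ) (κ : ℤ) :
    net.RepresentsTrunc σ base (g ∘ truncate (base ^ κ)) :=
  ⟨κ, hg.1, hg.2.1, fun x => hg.2.2 (truncate (base ^ κ) x)⟩

/-- width-6 UAT with binary-truncated inputs, non-affine polynomial activation. -/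
theorem statement8 (σ : ℝ → ℝ) (hσ : IsNonAffinePolyFun σ)
    (n : ℕ) (K : Set (Fin n → ℝ)) (hK : IsCompact K)
    (f : (Fin n → ℝ) → ℝ) (hf : ContinuousOn f K) :
    ∀ ε : ℝ, 0 < ε →
      ∃ (net : NeuralNet) (g : (Fin n → ℝ) → ℝ),
        NeuralNet.RepresentsTrunc σ net 2 g ∧ net.width = 6 ∧
        ∀ x ∈ K, |f x - g x| < ε := by
  intro ε hε
  obtain ⟨δ, hδ, hfδ⟩ := Metric.uniformContinuousOn_iff.mp
    (hK.uniformContinuousOn_of_continuous hf) (ε / 2) (half_pos hε)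
  obtain ⟨κ, hκ⟩ := exists_pow_lt_of_lt_one hδ one_half_lt_one
  set c : ℝ := 2 ^ (κ : ℤ)
  have hc : 0 < c := by positivity
  have hcδ : 1 / c < δ := by simpa [c] using hκ
  have hS := finite_image_truncate c hK.isBounded
  let rep := Function.invFunOn (truncate c) K
  obtain ⟨net, g, hg, hwidth, hgS⟩ :=
    exists_represents_width_six_of_finset hσ hS.toFinset (f ∘ rep) (half_pos hε)
  refine ⟨net, g ∘ truncate c, hg.representsTrunc 2 κ, hwidth, fun x hx => ?_⟩
  have hxS : truncate c x ∈ truncate c '' K := Set.mem_image_of_mem _ hx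
  obtain ⟨hrepK, hrep⟩ := Function.invFunOn_pos hxS
  have hfx : dist (f x) (f (rep (truncate c x))) < ε / 2 :=
    hfδ x hx _ hrepK ((dist_lt_of_truncate_eq hc hrep.symm).trans hcδ)
  have hgx := hgS _ (hS.mem_toFinset.mpr hxS)
  rw [Real.dist_eq] at hfx
  calc |f x - (g ∘ truncate c) x|
      ≤ |f x - f (rep (truncate c x))| + |(f ∘ rep) (truncate c x) - g (truncate c x)| :=
        abs_sub_le _ _ _
    _ < ε := by linarith
end

section
/- Fix integers n ≥ 1, κ ≥ 1 and j ∈ {1, …, n}. For each integer M with 0 ≤ 10^{−nκ}M < 1, the number a = 10^{−nκ}M has a unique expansion a = a₁·10^{−κ} + a₂·10^{−2κ} + ⋯ + a_n·10^{−nκ} with each a_i an integer satisfying 0 ≤ a_i < 10^κ. There exists a continuous function φ_j : [0,1] → ℝ such that for every such a and every t ∈ [a − 10^{−nκ−1}, a + 10^{−nκ−1}] ∩ [0,1], one has φ_j(t) = 10^{−κ} a_j (where a_j is the j-th digit in the expansion of a). -/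
/-!
Base-`10^κ` expansions of `M < 10^(nκ)` are the inverse of `finFunctionFinEquiv`, read with the
digits in reverse order. For the decoder, `t ↦ digit (round (10^(nκ) t))` is constant on each of
the finitely many closed intervals around the grid points, because there `10^(nκ) t` stays within
`1/10` of the integer `M`; so it is continuous on their union, and Tietze extends it to `ℝ`.
-/

open scoped BigOperators
open MeasureTheory
open scoped Classical

open Set

namespace Nat

variable {B n M : ℕ}

theorem sum_div_pow_mod_mul_pow (hM : M < B ^ n) :
    ∑ i : Fin n, M / B ^ (i : ℕ) % B * B ^ (i : ℕ) = M := by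
  simpa only [finFunctionFinEquiv_apply, finFunctionFinEquiv_symm_apply_val] using
    congrArg Fin.val (finFunctionFinEquiv.apply_symm_apply (⟨M, hM⟩ : Fin (B ^ n)))

theorem eq_div_pow_mod_of_eq_sum {d : Fin n → ℕ} (hd : ∀ i, d i < B)
    (hM : M = ∑ i, d i * B ^ (i : ℕ)) (i : Fin n) : d i = M / B ^ (i : ℕ) % B := by
  have := congrArg (fun f => (f i : ℕ))
    (finFunctionFinEquiv.symm_apply_apply (fun i => (⟨d i, hd i⟩ : Fin B)))
  simpa only [finFunctionFinEquiv_symm_apply_val, finFunctionFinEquiv_apply, ← hM] using this.symm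

theorem sum_mul_pow_sub_one_sub (d : Fin n → ℕ) :
    ∑ i : Fin n, d i * B ^ (n - 1 - i) = ∑ i : Fin n, d i.rev * B ^ (i : ℕ) := by
  rw [← Equiv.sum_comp Fin.revPerm]
  refine Fintype.sum_congr _ _ fun i => ?_
  simp only [Fin.revPerm_apply, Fin.val_rev]
  congr 2
  omega

theorem eq_div_pow_mod_of_eq_sum_rev {d : Fin n → ℕ} (hd : ∀ i, d i < B)
    (hM : M = ∑ i : Fin n, d i * B ^ (n - 1 - i)) (i : Fin n) :
    d i = M / B ^ (n - 1 - i) % B := by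
  rw [sum_mul_pow_sub_one_sub] at hM
  have := eq_div_pow_mod_of_eq_sum (fun i => hd i.rev) hM i.rev
  rwa [Fin.rev_rev, Fin.val_rev, show n - (i + 1) = n - 1 - i by omega] at this

theorem existsUnique_digits_rev (hM : M < B ^ n) :
    ∃! d : Fin n → ℕ, (∀ i, d i < B) ∧ M = ∑ i : Fin n, d i * B ^ (n - 1 - i) := by
  refine ⟨fun i => M / B ^ (n - 1 - i) % B, ⟨fun i => Nat.mod_lt _ ?_, ?_⟩,
    fun d ⟨hd, hMd⟩ => funext (eq_div_pow_mod_of_eq_sum_rev hd hMd)⟩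
  · exact Nat.pos_of_ne_zero fun hB => by simp [hB, zero_pow (Fin.pos i).ne'] at hM
  · rw [sum_mul_pow_sub_one_sub]
    conv_lhs => rw [← sum_div_pow_mod_mul_pow hM]
    refine Fintype.sum_congr _ _ fun i => ?_
    rw [Fin.val_rev, show n - 1 - (n - (i + 1)) = i by omega]

end Nat

universe u v

theorem ContinuousOn.exists_continuous_eqOn {X : Type u} {Y : Type v} [TopologicalSpace X]
    [NormalSpace X] [TopologicalSpace Y] [TietzeExtension.{u, v} Y] {s : Set X}
    (hs : IsClosed s) {g : X → Y} (hg : ContinuousOn g s) :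
    ∃ φ : X → Y, Continuous φ ∧ EqOn φ g s := by
  obtain ⟨φ, hφ⟩ := ContinuousMap.exists_restrict_eq hs ⟨s.domRestrict g, hg.domRestrict⟩
  exact ⟨φ, φ.continuous, fun x hx => congrArg (· ⟨x, hx⟩) hφ⟩

theorem round_mul_eq_of_mem_Icc {N r t : ℝ} (hN : 0 < N) (hr : N * r < 1 / 2) {M : ℤ}
    (ht : t ∈ Icc (M / N - r) (M / N + r)) : round (N * t) = M := by
  have hNt : N * t ∈ Icc (M - N * r) (M + N * r) := by
    constructor <;> nlinarith [ht.1, ht.2, mul_div_cancel₀ (M : ℝ) hN.ne']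
  exact round_eq_iff.2 ⟨by linarith [hNt.1], by linarith [hNt.2]⟩

theorem exists_continuous_eq_near_grid {N r : ℝ} (hN : 0 < N) (hr : N * r < 1 / 2) (K : ℕ)
    (D : ℕ → ℝ) : ∃ φ : ℝ → ℝ, Continuous φ ∧
      ∀ M < K, ∀ t ∈ Icc ((M : ℝ) / N - r) (M / N + r), φ t = D M := by
  set I : Fin K → Set ℝ := fun M => Icc ((M : ℝ) / N - r) (M / N + r)
  have hround (M : ℕ) (t : ℝ) (ht : t ∈ Icc ((M : ℝ) / N - r) (M / N + r)) :
      D (round (N * t)).toNat = D M := by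
    rw [round_mul_eq_of_mem_Icc hN hr (M := M) (by exact_mod_cast ht), Int.toNat_natCast]
  have hcont : ContinuousOn (fun t => D (round (N * t)).toNat) (⋃ M, I M) :=
    (locallyFinite_of_finite I).continuousOn_iUnion (fun _ => isClosed_Icc) fun M =>
      continuousOn_const.congr fun t ht => hround M t ht
  obtain ⟨φ, hφ, hφg⟩ :=
    hcont.exists_continuous_eqOn (isClosed_iUnion_of_finite fun _ => isClosed_Icc)
  exact ⟨φ, hφ, fun M hM t ht =>
    (hφg (mem_iUnion_of_mem ⟨M, hM⟩ ht)).trans (hround M t ht)⟩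

/-- unique base-`10^κ` expansion and existence of a continuous decoder
function `φ_j` extracting (a rescaling of) the `j`-th digit on small intervals around
the points `a = M / 10^(nκ)`.  Digits are indexed by `i : Fin n`, with `d i`
playing the role of `a_{i+1}`, so that `a = ∑ i, d i * 10^(-(i+1)κ)`, i.e.
`M = ∑ i, d i * 10^((n-1-i)κ)`. -/
theorem statement9 (n κ : ℕ)
    (j : ℕ) (hj1 : 1 ≤ j) (hjn : j ≤ n) :
    (∀ M : ℕ, M < 10 ^ (n * κ) →
      ∃! d : Fin n → ℕ, (∀ i : Fin n, d i < 10 ^ κ) ∧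
        M = ∑ i : Fin n, d i * 10 ^ ((n - 1 - (i : ℕ)) * κ)) ∧
    ∃ φ : ℝ → ℝ, ContinuousOn φ (Set.Icc 0 1) ∧
      ∀ M : ℕ, M < 10 ^ (n * κ) →
        ∀ d : Fin n → ℕ, (∀ i : Fin n, d i < 10 ^ κ) →
          M = ∑ i : Fin n, d i * 10 ^ ((n - 1 - (i : ℕ)) * κ) →
          ∀ t ∈ Set.Icc ((M : ℝ) / 10 ^ (n * κ) - 1 / 10 ^ (n * κ + 1))
                ((M : ℝ) / 10 ^ (n * κ) + 1 / 10 ^ (n * κ + 1)) ∩ Set.Icc (0 : ℝ) 1,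
            φ t = (d ⟨j - 1, by omega⟩ : ℝ) / 10 ^ κ := by
  simp only [pow_mul' 10 _ κ]
  refine ⟨fun M hM => Nat.existsUnique_digits_rev hM, ?_⟩
  have hr : (10 : ℝ) ^ (n * κ) * (1 / 10 ^ (n * κ + 1)) < 1 / 2 := by
    rw [pow_succ]
    field_simp
    norm_num
  obtain ⟨φ, hφ, hφD⟩ := exists_continuous_eq_near_grid (by positivity) hr ((10 ^ κ) ^ n)
    fun M => ((M / (10 ^ κ) ^ (n - 1 - (j - 1)) % 10 ^ κ : ℕ) : ℝ) / 10 ^ κ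
  refine ⟨φ, hφ.continuousOn, fun M hM d hd hMd t ht => ?_⟩
  rw [hφD M hM t ht.1, Nat.eq_div_pow_mod_of_eq_sum_rev hd hMd]
end

section
/- Let σ : ℝ → ℝ be continuously differentiable at some point α ∈ ℝ with σ′(α) ≠ 0. Then for every compact set K ⊆ ℝ and every ε > 0 there exist real numbers a, b, c, d (with a ≠ 0) such that |c·σ(a·x + b) + d − x| < ε for all x ∈ K; that is, a single σ-activated neuron composed with affine maps uniformly approximates the identity function on K. -/
open scoped BigOperators
open MeasureTheory
open scoped Classical

/-!
After normalising `σ` so that `σ'(α) = 1`, the neuron `x ↦ (σ (α + h x) - σ α) / h` is a rescaled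
increment of `σ` at `α`. Its distance to `x` is the first-order remainder divided by `h`, which is
`o(h x) / h`, hence uniformly small on a bounded set as `h → 0`.
-/

open Filter Topology

theorem HasDerivAt.tendstoUniformlyOn_rescaled_increment {f : ℝ → ℝ} {f' α : ℝ} {K : Set ℝ}
    (hf : HasDerivAt f f' α) (hK : Bornology.IsBounded K) :
    TendstoUniformlyOn (fun h x => (f (α + h * x) - f α) / h) (fun x => f' * x) (𝓝[≠] 0) K := by
  obtain ⟨M, hM, hKM⟩ := hK.exists_pos_norm_le
  rw [Metric.tendstoUniformlyOn_iff]
  intro ε hε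
  have hlittleO := (hasDerivAt_iff_isLittleO_nhds_zero.1 hf).def (c := ε / (2 * M)) (by positivity)
  obtain ⟨δ, hδ, hremainder⟩ := Metric.eventually_nhds_iff.1 hlittleO
  filter_upwards [nhdsWithin_le_nhds (Metric.ball_mem_nhds 0 (div_pos hδ hM)),
    self_mem_nhdsWithin] with h hball (hh0 : h ≠ 0) x hx
  have hx : |x| ≤ M := hKM x hx
  have hhM : |h| * M < δ := by
    rw [Metric.mem_ball, Real.dist_eq, sub_zero] at hball
    exact (lt_div_iff₀ hM).1 hball
  have hhx : |h * x| < δ := by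
    rw [abs_mul]
    exact (mul_le_mul_of_nonneg_left hx (abs_nonneg h)).trans_lt hhM
  have hbound := hremainder (show dist (h * x) 0 < δ by rwa [Real.dist_eq, sub_zero])
  simp only [smul_eq_mul, Real.norm_eq_abs] at hbound
  have hdist : dist (f' * x) ((f (α + h * x) - f α) / h)
      = |f (α + h * x) - f α - h * x * f'| / |h| := by
    rw [Real.dist_eq, ← abs_div, abs_sub_comm]
    congr 1
    field_simp
  rw [hdist, div_lt_iff₀ (abs_pos.2 hh0)]
  calc |f (α + h * x) - f α - h * x * f'|
      ≤ ε / (2 * M) * (|h| * |x|) := by rwa [← abs_mul]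
    _ ≤ ε / (2 * M) * (|h| * M) := by gcongr
    _ = ε / 2 * |h| := by field_simp
    _ < ε * |h| := by gcongr; linarith

theorem statement10_general (σ : ℝ → ℝ) (α : ℝ)
    (h1 : ∀ᶠ x in nhds α, DifferentiableAt ℝ σ x)
    (h3 : deriv σ α ≠ 0)
    (K : Set ℝ) (hK : IsCompact K) (ε : ℝ) (hε : 0 < ε) :
    ∃ a b c d : ℝ, a ≠ 0 ∧ ∀ x ∈ K, |c * σ (a * x + b) + d - x| < ε := by
  have hderiv := h1.self_of_nhds.hasDerivAt
  generalize deriv σ α = s at hderiv h3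
  have hnormalized : HasDerivAt (fun t => σ t / s) 1 α := by
    simpa [div_self h3] using hderiv.div_const s
  obtain ⟨a, hclose, ha⟩ := (Metric.tendstoUniformlyOn_iff.1
    (hnormalized.tendstoUniformlyOn_rescaled_increment hK.isBounded) ε hε
      |>.and self_mem_nhdsWithin).exists
  refine ⟨a, α, 1 / (a * s), -σ α / (a * s), ha, fun x hx => ?_⟩
  convert hclose x hx using 1
  rw [Real.dist_eq, abs_sub_comm, add_comm (a * x) α]
  congr 1
  field_simp
  ring

/-- a single neuron composed with affine maps uniformly approximates
the identity on compact sets. -/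
theorem statement10 (σ : ℝ → ℝ) (α : ℝ)
    (h1 : ∀ᶠ x in nhds α, DifferentiableAt ℝ σ x)
    (h2 : ContinuousAt (deriv σ) α) (h3 : deriv σ α ≠ 0)
    (K : Set ℝ) (hK : IsCompact K) (ε : ℝ) (hε : 0 < ε) :
    ∃ a b c d : ℝ, a ≠ 0 ∧ ∀ x ∈ K, |c * σ (a * x + b) + d - x| < ε :=
  statement10_general σ α h1 h3 K hK ε hε
end
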